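/- arXiv:math/0411408 — 13 statements merged into one kernel-verified Lean document; each statement's English description precedes it below -/
import Mathlib

section
/- Let Φ be an automorphism of a category C, and suppose that for some class E of objects of C, the object Φ(A) is isomorphic to A for every A in E. Then Φ is a composition Φ = Ψ ∘ Γ of two automorphisms of C, where Γ fixes all objects in E and Ψ is an inner automorphism of C. -/
/-!
Let `S` be the class of objects `X` with `Φ X ≅ X`. It contains `E`, and since `Φ` is an
automorphism it is stable under `Φ` and `Φ⁻¹`. Hence the map `s` on objects that is `Φ` on `S`
and the identity off `S` is a permutation with `X ≅ s X` for every `X`. Conjugating morphisms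
by these isomorphisms gives an inner automorphism `Ψ` acting on objects by `s`, and
`Γ := Ψ⁻¹ ∘ Φ` fixes every object of `S`.
-/

open CategoryTheory

namespace CategoryTheory.Functor

universe v u

section

variable {C D E : Type*} [Category C] [Category D] [Category E]

lemma nonempty_iso_obj_iff_of_comp_eq_id {F : C ⥤ D} {G : D ⥤ C} (h : F ⋙ G = 𝟭 C)
    (X Y : C) : Nonempty (F.obj X ≅ F.obj Y) ↔ Nonempty (X ≅ Y) :=
  ⟨fun ⟨i⟩ => ⟨eqToIso (congr_obj h X).symm ≪≫ G.mapIso i ≪≫ eqToIso (congr_obj h Y)⟩,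
    fun ⟨i⟩ => ⟨F.mapIso i⟩⟩

lemma comp_comp_comp_eq_id {F : C ⥤ D} {F' : D ⥤ C} {G : D ⥤ E} {G' : E ⥤ D}
    (hF : F ⋙ F' = 𝟭 C) (hG : G ⋙ G' = 𝟭 D) : (F ⋙ G) ⋙ G' ⋙ F' = 𝟭 C := by
  rw [Functor.assoc, ← Functor.assoc G, hG, Functor.id_comp, hF]

end

variable {C : Type u} [Category.{v} C]

def conj (s : C → C) (f : ∀ X, X ≅ s X) : C ⥤ C where
  obj := s
  map {X Y} μ := (f X).inv ≫ μ ≫ (f Y).hom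

def idIsoConj (s : C → C) (f : ∀ X, X ≅ s X) : 𝟭 C ≅ conj s f :=
  NatIso.ofComponents f (by simp [conj])

variable (s : Equiv.Perm C) (f : ∀ X, X ≅ s X)

def conjSymm : C ⥤ C :=
  conj s.symm fun X => eqToIso (s.apply_symm_apply X).symm ≪≫ (f (s.symm X)).symm

lemma conjSymm_comp_conj : conjSymm s f ⋙ conj s f = 𝟭 C :=
  Functor.ext (fun X => s.apply_symm_apply X) (by intros; simp [conjSymm, conj])

lemma conj_comp_conjSymm : conj s f ⋙ conjSymm s f = 𝟭 C :=
  Functor.ext (fun X => s.symm_apply_apply X) (by intros; simp [conjSymm, conj])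

end CategoryTheory.Functor

lemma Equiv.Perm.nonempty_iso_ofSubtype_subtypePerm {C : Type*} [Category C] {p : C → Prop}
    [DecidablePred p] (e : Equiv.Perm C) (he : ∀ X, p (e X) ↔ p X)
    (hp : ∀ X, p X → Nonempty (X ≅ e X)) (X : C) :
    Nonempty (X ≅ Equiv.Perm.ofSubtype (e.subtypePerm he) X) := by
  by_cases hX : p X
  · rw [Equiv.Perm.ofSubtype_subtypePerm_of_mem he hX]
    exact hp X hX
  · rw [Equiv.Perm.ofSubtype_subtypePerm_of_not_mem he hX]
    exact ⟨Iso.refl X⟩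

/-- Let `Φ` be an automorphism of a category `C` (a functor with a strict
two-sided inverse), and suppose that for some class `E` of objects of `C`, `Φ.obj A` is
isomorphic to `A` for every `A ∈ E`. Then `Φ = Ψ ∘ Γ` where `Γ` and `Ψ` are automorphisms
of `C`, `Γ` fixes all objects of `E`, and `Ψ` is inner (isomorphic to the identity). -/
theorem stmt1 {C : Type*} [Category C] (Φ Φinv : C ⥤ C)
    (hΦ1 : Φ ⋙ Φinv = 𝟭 C) (hΦ2 : Φinv ⋙ Φ = 𝟭 C)
    (E : Set C) (hE : ∀ A ∈ E, Nonempty (Φ.obj A ≅ A)) :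
    ∃ (Γ Γinv Ψ Ψinv : C ⥤ C),
      Γ ⋙ Γinv = 𝟭 C ∧ Γinv ⋙ Γ = 𝟭 C ∧
      Ψ ⋙ Ψinv = 𝟭 C ∧ Ψinv ⋙ Ψ = 𝟭 C ∧
      Nonempty (𝟭 C ≅ Ψ) ∧ (∀ A ∈ E, Γ.obj A = A) ∧ Γ ⋙ Ψ = Φ := by
  classical
  let e : Equiv.Perm C :=
    ⟨Φ.obj, Φinv.obj, Functor.congr_obj hΦ1, Functor.congr_obj hΦ2⟩
  let S : C → Prop := fun X => Nonempty (Φ.obj X ≅ X)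
  have hS : ∀ X, S (e X) ↔ S X := fun X =>
    Functor.nonempty_iso_obj_iff_of_comp_eq_id hΦ1 (Φ.obj X) X
  let s := Equiv.Perm.ofSubtype (e.subtypePerm hS)
  let f : ∀ X, X ≅ s X := fun X =>
    (e.nonempty_iso_ofSubtype_subtypePerm hS (fun _ ⟨i⟩ => ⟨i.symm⟩) X).some
  refine ⟨Φ ⋙ Functor.conjSymm s f, Functor.conj s f ⋙ Φinv, Functor.conj s f,
    Functor.conjSymm s f, Functor.comp_comp_comp_eq_id hΦ1 (Functor.conjSymm_comp_conj s f),
    Functor.comp_comp_comp_eq_id (Functor.conj_comp_conjSymm s f) hΦ2,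
    Functor.conj_comp_conjSymm s f, Functor.conjSymm_comp_conj s f,
    ⟨Functor.idIsoConj s f⟩, fun A hA => ?_, ?_⟩
  · exact s.symm_apply_eq.2 (Equiv.Perm.ofSubtype_subtypePerm_of_mem hS (hE A hA)).symm
  · rw [Functor.assoc, Functor.conjSymm_comp_conj, Functor.comp_id]
end

section
/- Let C be a category with a faithful functor Q : C → Set, let F be a free object in C over a set X (i.e., there is a map m : X → Q(F) such that for every object A and map f : X → Q(A) there is a unique morphism f̄ : F → A with Q(f̄) ∘ m = f). If Φ is an automorphism of C that is D-inner for some extension D of C extending Q, then Φ(F) is also a free object over X; in particular Φ(F) is isomorphic to F. -/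
open CategoryTheory

/-- Let `C` be a category with a faithful functor `Q : C ⥤ Type`, and let
`F` be a free object in `C` over a set `X` (via `m : X → Q.obj F`).  Suppose `Φ` is an
automorphism of `C` that is `D`-inner for some extension `D` of `C` (a category `D`
containing `C` via a faithful inclusion `ι`, whose forgetful functor `QD` extends `Q`),
i.e. there is a natural isomorphism `s : ι ≅ Φ ⋙ ι` (so `Φ(ν) = s_B ∘ ν ∘ s_A⁻¹`).
Then `Φ.obj F` is again a free object over `X`, and in particular `Φ.obj F ≅ F` in `C`. -/
theorem stmt2 {C D : Type*} [Category C] [Category D]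
    (Q : C ⥤ Type w) [Q.Faithful] (QD : D ⥤ Type w) [QD.Faithful]
    (ι : C ⥤ D) [ι.Faithful] (hQ : ι ⋙ QD = Q)
    (Φ Φinv : C ⥤ C) (hΦ1 : Φ ⋙ Φinv = 𝟭 C) (hΦ2 : Φinv ⋙ Φ = 𝟭 C)
    (s : ι ≅ Φ ⋙ ι)
    (X : Type w) (F : C) (m : X → Q.obj F)
    (hfree : ∀ (A : C) (f : X → Q.obj A), ∃! g : F ⟶ A, ∀ x, Q.map g (m x) = f x) :
    (∃ m' : X → Q.obj (Φ.obj F),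
      ∀ (A : C) (f : X → Q.obj A), ∃! g : Φ.obj F ⟶ A, ∀ x, Q.map g (m' x) = f x) ∧
    Nonempty (Φ.obj F ≅ F) := by
  subst hQ
  set m' : X → (ι ⋙ QD).obj (Φ.obj F) := fun x => QD.map (s.hom.app F) (m x) with hm'
  -- key computation: applying `Φ.map ν` to `m'`
  have comp_lem : ∀ (A₀ : C) (ν : F ⟶ A₀) (x : X),
      (ι ⋙ QD).map (Φ.map ν) (m' x)
        = QD.map (s.hom.app A₀) ((ι ⋙ QD).map ν (m x)) := by
    intro A₀ ν x
    have hnat : s.hom.app F ≫ (Φ ⋙ ι).map ν = ι.map ν ≫ s.hom.app A₀ :=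
      (s.hom.naturality ν).symm
    have h0 : QD.map (s.hom.app F ≫ (Φ ⋙ ι).map ν) (m x)
        = QD.map (ι.map ν ≫ s.hom.app A₀) (m x) := by rw [hnat]
    rw [FunctorToTypes.map_comp_apply, FunctorToTypes.map_comp_apply] at h0
    exact h0
  have key : ∀ (A : C) (f : X → (ι ⋙ QD).obj A),
      ∃! g : Φ.obj F ⟶ A, ∀ x, (ι ⋙ QD).map g (m' x) = f x := by
    intro A f
    have hA : Φ.obj (Φinv.obj A) = A := Functor.congr_obj hΦ2 A
    set A₀ := Φinv.obj A with hA₀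
    set f₀ : X → (ι ⋙ QD).obj A₀ :=
      fun x => QD.map (s.inv.app A₀) ((ι ⋙ QD).map (eqToHom hA.symm) (f x)) with hf₀
    obtain ⟨ν, hν, huniq⟩ := hfree A₀ f₀
    -- the condition transfer
    have cond : ∀ (ν' : F ⟶ A₀),
        (∀ x, (ι ⋙ QD).map (Φ.map ν' ≫ eqToHom hA) (m' x) = f x)
          ↔ (∀ x, (ι ⋙ QD).map ν' (m x) = f₀ x) := by
      intro ν'
      constructor
      · intro h x
        have h1 := h x
        rw [FunctorToTypes.map_comp_apply] at h1
        have h2 : (ι ⋙ QD).map (eqToHom hA.symm)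
            ((ι ⋙ QD).map (eqToHom hA) ((ι ⋙ QD).map (Φ.map ν') (m' x)))
            = (ι ⋙ QD).map (eqToHom hA.symm) (f x) := by rw [h1]
        rw [← FunctorToTypes.map_comp_apply, eqToHom_trans, eqToHom_refl,
          FunctorToTypes.map_id_apply, comp_lem A₀ ν' x] at h2
        have h3 : QD.map (s.inv.app A₀)
            (QD.map (s.hom.app A₀) ((ι ⋙ QD).map ν' (m x)))
            = QD.map (s.inv.app A₀) ((ι ⋙ QD).map (eqToHom hA.symm) (f x)) := by rw [h2]
        rw [← FunctorToTypes.map_comp_apply, Iso.hom_inv_id_app,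
          FunctorToTypes.map_id_apply] at h3
        rw [h3, hf₀]
      · intro h x
        rw [FunctorToTypes.map_comp_apply, comp_lem A₀ ν' x, h x]
        simp only [hf₀]
        rw [← FunctorToTypes.map_comp_apply, Iso.inv_hom_id_app, FunctorToTypes.map_id_apply,
          ← FunctorToTypes.map_comp_apply, eqToHom_trans, eqToHom_refl,
          FunctorToTypes.map_id_apply]
    refine ⟨Φ.map ν ≫ eqToHom hA, (cond ν).2 hν, ?_⟩
    intro g' hg'
    -- fullness of Φ via Φinv
    have e1 : F = Φinv.obj (Φ.obj F) := (Functor.congr_obj hΦ1 F).symm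
    set ν' : F ⟶ A₀ := eqToHom e1 ≫ Φinv.map g' with hν'
    have hfull : Φ.map ν' ≫ eqToHom hA = g' := by
      have hc := Functor.congr_hom hΦ2 g'
      simp only [Functor.comp_map, Functor.id_map] at hc
      rw [hν', Functor.map_comp, hc]
      simp [eqToHom_map]
    have hcond' : ∀ x, (ι ⋙ QD).map ν' (m x) = f₀ x := by
      apply (cond ν').1
      rw [hfull]; exact hg'
    have hee : ν' = ν := huniq ν' hcond'
    rw [← hfull, hee]
  refine ⟨⟨m', key⟩, ?_⟩
  obtain ⟨g, hg, _⟩ := key F m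
  obtain ⟨g', hg', _⟩ := hfree (Φ.obj F) m'
  obtain ⟨_, _, huF⟩ := hfree F m
  obtain ⟨_, _, huΦ⟩ := key (Φ.obj F) m'
  refine ⟨⟨g, g', ?_, ?_⟩⟩
  · rw [huΦ (g ≫ g') (by intro x; rw [FunctorToTypes.map_comp_apply, hg x, hg' x]),
      huΦ (𝟙 (Φ.obj F)) (by intro x; rw [FunctorToTypes.map_id_apply])]
  · rw [huF (g' ≫ g) (by intro x; rw [FunctorToTypes.map_comp_apply, hg' x, hg x]),
      huF (𝟙 F) (by intro x; rw [FunctorToTypes.map_id_apply])]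
end

section
/- Let C be a category with faithful functor Q : C → Set represented by a pair (A₀, x₀), and let Φ be an automorphism of C fixing A₀. Define s_A(a) = Q(Φ(α_a))(x₀) where α_a : A₀ → A is the unique morphism with Q(α_a)(x₀) = a. If D is an extension of C with Q extended, and Φ(ν) = σ_B ∘ ν ∘ σ_A⁻¹ for all ν : A → B where σ_A : A → Φ(A) are D-isomorphisms satisfying Q(σ_{A₀})(x₀) = x₀, then Q(σ_A) = s_A for every object A. -/
open CategoryTheory

/-- With `Q : C ⥤ Type` faithful and represented by `(A₀, x₀)`, and `Φ` an
automorphism of `C` fixing `A₀`, define `s_A(a) = Q(Φ(α_a))(x₀)`.  If `Φ` is conjugation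
by a family of isomorphisms `σ_A : A → Φ(A)` of some extension `D` of `C` — which, at the
level of underlying sets, means a family of bijections `σ_A : Q(A) ≃ Q(Φ(A))` with
`Q(Φ(ν)) = σ_B ∘ Q(ν) ∘ σ_A⁻¹` for all `ν : A ⟶ B` — satisfying `Q(σ_{A₀})(x₀) = x₀`,
then `Q(σ_A) = s_A` for every object `A`. -/
theorem stmt4 {C : Type u} [Category.{v} C] (Q : C ⥤ Type w) [Q.Faithful]
    (A₀ : C) (x₀ : Q.obj A₀)
    (hrep : ∀ (A : C) (a : Q.obj A), ∃! α : A₀ ⟶ A, Q.map α x₀ = a)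
    (Φ Φinv : C ⥤ C) (hΦ1 : Φ ⋙ Φinv = 𝟭 C) (hΦ2 : Φinv ⋙ Φ = 𝟭 C)
    (h₀ : Φ.obj A₀ = A₀)
    (α : ∀ (A : C), Q.obj A → (A₀ ⟶ A)) (hα : ∀ A a, Q.map (α A a) x₀ = a)
    (σ : ∀ A : C, Q.obj A ≃ Q.obj (Φ.obj A))
    (hσnat : ∀ (A B : C) (ν : A ⟶ B) (a : Q.obj A),
      Q.map (Φ.map ν) (σ A a) = σ B (Q.map ν a))
    (hσ₀ : Q.map (eqToHom h₀) (σ A₀ x₀) = x₀) :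
    ∀ (A : C) (a : Q.obj A), σ A a = Q.map (eqToHom h₀.symm ≫ Φ.map (α A a)) x₀ := by
  intro A a
  have h1 : σ A₀ x₀ = Q.map (eqToHom h₀.symm) x₀ := by
    have := congrArg (Q.map (eqToHom h₀.symm)) hσ₀
    rwa [← FunctorToTypes.map_comp_apply, eqToHom_trans, eqToHom_refl, FunctorToTypes.map_id_apply] at this
  rw [FunctorToTypes.map_comp_apply, ← h1, hσnat, hα]
end

section
/- Let C be a category with a faithful functor Q : C → Set represented by an object A₀. An automorphism Φ of the category C is potential-inner if and only if A₀ and Φ(A₀) are isomorphic in C. -/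
open CategoryTheory

/-- Let `C` be a category with a faithful functor `Q : C ⥤ Type` represented
by an object `A₀` (via an element `x₀ ∈ Q(A₀)`).  An automorphism `Φ` of `C` is
potential-inner — i.e. it is `D`-inner for some extension `D` of `C` with the same
objects, which (since `Q` is faithful) amounts to the existence of a family of bijections
`s_A : Q(A) ≃ Q(Φ(A))` with `Q(Φ(ν)) = s_B ∘ Q(ν) ∘ s_A⁻¹` for every `ν : A ⟶ B` —
if and only if `A₀` and `Φ(A₀)` are isomorphic in `C`. -/
theorem stmt6 {C : Type u} [Category.{v} C] (Q : C ⥤ Type w) [Q.Faithful]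
    (A₀ : C) (x₀ : Q.obj A₀)
    (hrep : ∀ (A : C) (a : Q.obj A), ∃! α : A₀ ⟶ A, Q.map α x₀ = a)
    (Φ Φinv : C ⥤ C) (hΦ1 : Φ ⋙ Φinv = 𝟭 C) (hΦ2 : Φinv ⋙ Φ = 𝟭 C) :
    (∃ s : ∀ A : C, Q.obj A ≃ Q.obj (Φ.obj A),
      ∀ (A B : C) (ν : A ⟶ B) (a : Q.obj A),
        Q.map (Φ.map ν) (s A a) = s B (Q.map ν a)) ↔
    Nonempty (A₀ ≅ Φ.obj A₀) := by
  let e : C ≌ C := CategoryTheory.Equivalence.mk Φ Φinv (eqToIso hΦ1.symm) (eqToIso hΦ2)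
  haveI : Φ.IsEquivalence := e.isEquivalence_functor
  -- uniqueness part of the representation by (A₀, x₀)
  have huniq : ∀ {X : C} (β β' : A₀ ⟶ X), Q.map β x₀ = Q.map β' x₀ → β = β' := by
    intro X β β' h
    obtain ⟨α, hα, hu⟩ := hrep X (Q.map β x₀)
    rw [hu β rfl, hu β' h.symm]
  constructor
  · rintro ⟨s, hs⟩
    set B₀ := Φinv.obj A₀ with hB₀
    have hc : Φ.obj B₀ = A₀ := Functor.congr_obj hΦ2 A₀
    set c : Φ.obj B₀ ≅ A₀ := eqToIso hc with hcdef
    set y : Q.obj B₀ := (s B₀).symm (Q.map c.inv x₀) with hy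
    have hsy : s B₀ y = Q.map c.inv x₀ := (s B₀).apply_symm_apply _
    -- key computation: Q.map β y in terms of x₀
    have hkey : ∀ {X : C} (β : B₀ ⟶ X),
        s X (Q.map β y) = Q.map (c.inv ≫ Φ.map β) x₀ := by
      intro X β
      rw [← hs B₀ X β y, hsy, ← FunctorToTypes.map_comp_apply]
    -- uniqueness for representation by (B₀, y)
    have huniqB : ∀ {X : C} (β β' : B₀ ⟶ X), Q.map β y = Q.map β' y → β = β' := by
      intro X β β' h
      have h2 : Q.map (c.inv ≫ Φ.map β) x₀ = Q.map (c.inv ≫ Φ.map β') x₀ := by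
        rw [← hkey β, ← hkey β', h]
      have h3 := huniq _ _ h2
      have h4 : Φ.map β = Φ.map β' := by
        have := (cancel_epi c.inv).mp h3
        exact this
      exact Φ.map_injective h4
    -- existence of g : B₀ ⟶ A₀ with Q.map g y = x₀
    obtain ⟨γ, hγ, -⟩ := hrep (Φ.obj A₀) (s A₀ x₀)
    set g : B₀ ⟶ A₀ := Φ.preimage (c.hom ≫ γ) with hg
    have hgy : Q.map g y = x₀ := by
      have h1 : s A₀ (Q.map g y) = Q.map (c.inv ≫ Φ.map g) x₀ := hkey g
      rw [hg, Φ.map_preimage, ← Category.assoc, c.inv_hom_id, Category.id_comp, hγ] at h1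
      exact (s A₀).injective h1
    -- f : A₀ ⟶ B₀ with Q.map f x₀ = y
    obtain ⟨f, hf, -⟩ := hrep B₀ y
    have hfg : f ≫ g = 𝟙 A₀ := by
      apply huniq
      rw [FunctorToTypes.map_comp_apply, hf, hgy, FunctorToTypes.map_id_apply]
    have hgf : g ≫ f = 𝟙 B₀ := by
      apply huniqB
      rw [FunctorToTypes.map_comp_apply, hgy, hf, FunctorToTypes.map_id_apply]
    have iso : A₀ ≅ B₀ := ⟨f, g, hfg, hgf⟩
    exact ⟨c.symm ≪≫ (Φ.mapIso iso).symm⟩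
  · rintro ⟨u⟩
    set y₀ := Q.map u.hom x₀ with hy₀
    -- uniqueness for the representation by (Φ A₀, y₀)
    have hUy : ∀ {X : C} (β β' : Φ.obj A₀ ⟶ X), Q.map β y₀ = Q.map β' y₀ → β = β' := by
      intro X β β' h
      have h2 : Q.map (u.hom ≫ β) x₀ = Q.map (u.hom ≫ β') x₀ := by
        rw [FunctorToTypes.map_comp_apply, FunctorToTypes.map_comp_apply, ← hy₀, h]
      exact (cancel_epi u.hom).mp (huniq _ _ h2)
    -- the candidate map
    set t : ∀ A : C, Q.obj A → Q.obj (Φ.obj A) :=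
      fun A a => Q.map (Φ.map (hrep A a).choose) y₀ with ht
    have hch : ∀ (A : C) (a : Q.obj A), Q.map (hrep A a).choose x₀ = a :=
      fun A a => (hrep A a).choose_spec.1
    have hbij : ∀ A : C, Function.Bijective (t A) := by
      intro A
      constructor
      · intro a a' h
        have h2 : Φ.map (hrep A a).choose = Φ.map (hrep A a').choose := hUy _ _ h
        have h3 : (hrep A a).choose = (hrep A a').choose := Φ.map_injective h2
        rw [← hch A a, ← hch A a', h3]
      · intro b
        obtain ⟨β, hβ, -⟩ := hrep (Φ.obj A) b
        set α : A₀ ⟶ A := Φ.preimage (u.inv ≫ β) with hα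
        refine ⟨Q.map α x₀, ?_⟩
        have hc : (hrep A (Q.map α x₀)).choose = α :=
          ((hrep A (Q.map α x₀)).choose_spec.2 α rfl).symm
        rw [ht]
        dsimp only
        rw [hc, hα, Φ.map_preimage, hy₀, ← FunctorToTypes.map_comp_apply,
          ← Category.assoc, u.hom_inv_id, Category.id_comp, hβ]
    refine ⟨fun A => Equiv.ofBijective (t A) (hbij A), ?_⟩
    intro A B ν a
    show Q.map (Φ.map ν) (t A a) = t B (Q.map ν a)
    have hc : (hrep B (Q.map ν a)).choose = (hrep A a).choose ≫ ν := by
      refine ((hrep B (Q.map ν a)).choose_spec.2 _ ?_).symm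
      show Q.map ((hrep A a).choose ≫ ν) x₀ = Q.map ν a
      rw [FunctorToTypes.map_comp_apply, hch A a]
    rw [ht]
    dsimp only
    rw [hc, Φ.map_comp, FunctorToTypes.map_comp_apply]
end

section
/- Let C be a category with faithful functor Q represented by (A₀, x₀), A a free object over X via m : X → Q(A), Φ an automorphism of C fixing A₀ and A with s_A(m(x)) = m(x) for all x ∈ X. For a map f : X → Q(A), let θ_f denote the unique endomorphism of A with Q(θ_f)(m(x)) = f(x) for all x ∈ X. Then Φ(θ_f) = θ_{s_A ∘ f}, where s_A(a) = Q(Φ(α_a))(x₀). -/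
open CategoryTheory

/-- Let `Q : C ⥤ Type` be faithful and represented by `(A₀, x₀)` (with
chosen morphisms `α A a : A₀ ⟶ A`, `Q(α A a)(x₀) = a`), let `A` be free over `X` via
`m : X → Q(A)`, and let `Φ` be an automorphism of `C` fixing `A₀` and `A` such that the
induced bijection `s_A` (given by `s_A(a) = Q(Φ(α_a))(x₀)`) fixes all generators:
`s_A(m(x)) = m(x)`.  For `f : X → Q(A)`, let `θ_f : A ⟶ A` be the unique endomorphism
with `Q(θ_f)(m(x)) = f(x)`.  Then `Φ(θ_f) = θ_{s_A ∘ f}`. -/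
theorem stmt9 {C : Type u} [Category.{v} C] (Q : C ⥤ Type w) [Q.Faithful]
    (A₀ : C) (x₀ : Q.obj A₀)
    (hrep : ∀ (A : C) (a : Q.obj A), ∃! α : A₀ ⟶ A, Q.map α x₀ = a)
    (α : ∀ (A : C), Q.obj A → (A₀ ⟶ A)) (hα : ∀ A a, Q.map (α A a) x₀ = a)
    (A : C) (X : Type w) (m : X → Q.obj A)
    (hfree : ∀ (B : C) (f : X → Q.obj B), ∃! g : A ⟶ B, ∀ x, Q.map g (m x) = f x)
    (Φ Φinv : C ⥤ C) (hΦ1 : Φ ⋙ Φinv = 𝟭 C) (hΦ2 : Φinv ⋙ Φ = 𝟭 C)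
    (h₀ : Φ.obj A₀ = A₀) (hA : Φ.obj A = A)
    (sA : Q.obj A → Q.obj A)
    (hsA : ∀ a, sA a = Q.map (eqToHom h₀.symm ≫ Φ.map (α A a) ≫ eqToHom hA) x₀)
    (hgen : ∀ x : X, sA (m x) = m x)
    (θ : (X → Q.obj A) → (A ⟶ A))
    (hθ : ∀ (f : X → Q.obj A) (x : X), Q.map (θ f) (m x) = f x)
    (f : X → Q.obj A) :
    eqToHom hA.symm ≫ Φ.map (θ f) ≫ eqToHom hA = θ (sA ∘ f) := by
  obtain ⟨g₀, hg₀, hu⟩ := hfree A (sA ∘ f)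
  have key : ∀ x, Q.map (eqToHom hA.symm ≫ Φ.map (θ f) ≫ eqToHom hA) (m x) = (sA ∘ f) x := by
    intro x
    have hcomp : α A (m x) ≫ θ f = α A (f x) := by
      obtain ⟨β, hβ, hβu⟩ := hrep A (f x)
      have h1 : Q.map (α A (m x) ≫ θ f) x₀ = f x := by
        rw [Q.map_comp, types_comp_apply, hα, hθ]
      rw [hβu (α A (m x) ≫ θ f) h1, hβu (α A (f x)) (hα A (f x))]
    calc Q.map (eqToHom hA.symm ≫ Φ.map (θ f) ≫ eqToHom hA) (m x)
        = Q.map (eqToHom hA.symm ≫ Φ.map (θ f) ≫ eqToHom hA)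
            (Q.map (eqToHom h₀.symm ≫ Φ.map (α A (m x)) ≫ eqToHom hA) x₀) := by
          rw [← hsA, hgen]
      _ = Q.map ((eqToHom h₀.symm ≫ Φ.map (α A (m x)) ≫ eqToHom hA) ≫
            (eqToHom hA.symm ≫ Φ.map (θ f) ≫ eqToHom hA)) x₀ := by
          simp only [FunctorToTypes.map_comp_apply]
      _ = Q.map (eqToHom h₀.symm ≫ Φ.map (α A (f x)) ≫ eqToHom hA) x₀ := by
          rw [← hcomp, Φ.map_comp]; simp
      _ = (sA ∘ f) x := (hsA _).symm
  rw [hu _ key, hu _ (fun x => hθ (sA ∘ f) x)]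
end

section
/- Let V be a variety of universal algebras, C a full subcategory of the category of all V-algebras and homomorphisms, and A⁰ an object of C such that for every object A of C and any two distinct elements a₁, a₂ of A there exists a homomorphism ν : A → A⁰ with ν(a₁) ≠ ν(a₂). Then A⁰ is a right indicator in C: for any objects A, B and any bijection s : A → B, if for every homomorphism ν : B → A⁰ the composite ν ∘ s is a homomorphism A → A⁰, then s is itself an isomorphism of algebras A → B. -/
open FirstOrder

/-- Let `C` be a full subcategory of a category of universal algebras
(structures for an algebraic language `L`, with all homomorphisms), given by an indexed
family of algebras `M i`.  Let `A⁰ = M i0` be an object such that for every object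
`M i` and any two distinct elements `a₁ ≠ a₂` of `M i` there is a homomorphism
`ν : M i → A⁰` with `ν a₁ ≠ ν a₂`.  Then `A⁰` is a right indicator: for any objects
`A = M iA`, `B = M iB` and any bijection `s : A ≃ B`, if for every homomorphism
`ν : B → A⁰` the composite `ν ∘ s` is a homomorphism, then `s` itself is an isomorphism
of algebras `A ≃[L] B`. -/
theorem stmt10 {L : Language} (halg : ∀ n, IsEmpty (L.Relations n))
    {ι : Type*} (M : ι → Type u) [∀ i, L.Structure (M i)] (i0 : ι)
    (hsep : ∀ (i : ι) (a₁ a₂ : M i), a₁ ≠ a₂ →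
      ∃ ν : M i →[L] M i0, ν a₁ ≠ ν a₂)
    (iA iB : ι) (s : M iA ≃ M iB)
    (hcomp : ∀ ν : M iB →[L] M i0, ∃ μ : M iA →[L] M i0, ⇑μ = ⇑ν ∘ ⇑s) :
    ∃ γ : M iA ≃[L] M iB, ⇑γ = ⇑s := by
  have key : ∀ {n} (f : L.Functions n) (x : Fin n → M iA),
      s (Language.Structure.funMap f x) = Language.Structure.funMap f (⇑s ∘ x) := by
    intro n f x
    by_contra h
    obtain ⟨ν, hν⟩ := hsep iB _ _ h
    obtain ⟨μ, hμ⟩ := hcomp ν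
    apply hν
    have h1 : μ (Language.Structure.funMap f x) = Language.Structure.funMap f (⇑μ ∘ x) := μ.map_fun f x
    rw [hμ] at h1
    simp only [Function.comp_apply] at h1
    rw [h1]
    rw [show ((⇑ν ∘ ⇑s) ∘ x) = ⇑ν ∘ (⇑s ∘ x) from rfl, ← ν.map_fun f (⇑s ∘ x)]
  exact ⟨⟨s, fun {n} f x => key f x, fun {n} r => (halg n).elim r⟩, rfl⟩
end

section
/- Let C be a full subcategory of a category of universal algebras and homomorphisms, and let A⁰ be an object of C such that for every object A of C and every finite subset X of A with cardinality at most the arity of any operation, there exists a homomorphism ν : A⁰ → A with X contained in the image of ν. Then A⁰ is a left indicator in C: for any objects A, B and any bijection s : A → B, if for every homomorphism ν : A⁰ → A the composite s ∘ ν is a homomorphism A⁰ → B, then s is an isomorphism of algebras A → B. -/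
open FirstOrder

/-- Let `C` be a full subcategory of a category of universal algebras
(structures for an algebraic language `L`), given by an indexed family of algebras
`M i`, and let `A⁰ = M i0` be an object such that for every object `M i` and every
tuple of elements of `M i` of length equal to the arity of some operation, there is a
homomorphism `ν : A⁰ → M i` whose image contains the tuple.  Then `A⁰` is a left
indicator: for any objects `A = M iA`, `B = M iB` and any bijection `s : A ≃ B`, if for
every homomorphism `ν : A⁰ → A` the composite `s ∘ ν` is a homomorphism, then `s` is an
isomorphism of algebras `A ≃[L] B`. -/
theorem stmt11 {L : Language} (halg : ∀ n, IsEmpty (L.Relations n))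
    {ι : Type*} (M : ι → Type u) [∀ i, L.Structure (M i)] (i0 : ι)
    (hcover : ∀ (i : ι) (n : ℕ), Nonempty (L.Functions n) →
      ∀ x : Fin n → M i, ∃ ν : M i0 →[L] M i, ∀ k, x k ∈ Set.range ν)
    (iA iB : ι) (s : M iA ≃ M iB)
    (hcomp : ∀ ν : M i0 →[L] M iA, ∃ μ : M i0 →[L] M iB, ⇑μ = ⇑s ∘ ⇑ν) :
    ∃ γ : M iA ≃[L] M iB, ⇑γ = ⇑s := by
  refine ⟨⟨s, ?_, ?_⟩, rfl⟩
  · intro n f x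
    obtain ⟨ν, hν⟩ := hcover iA n ⟨f⟩ x
    choose y hy using hν
    obtain ⟨μ, hμ⟩ := hcomp ν
    have h1 : ν (Language.Structure.funMap f y) = Language.Structure.funMap f x := by
      rw [ν.map_fun]; congr 1; funext k; exact hy k
    have h2 : μ (Language.Structure.funMap f y) = Language.Structure.funMap f (fun k => s (x k)) := by
      rw [μ.map_fun]; congr 1; funext k
      show μ (y k) = s (x k)
      rw [show μ (y k) = s (ν (y k)) from congrFun hμ (y k), hy k]
    have := congrFun hμ (Language.Structure.funMap f y)
    simp only [Function.comp_apply, h1, h2] at this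
    exact this.symm
  · intro n r
    exact (halg n).elim r
end

section
/- Let C be a category with a faithful functor Q : C → Set represented by an object A₀, and suppose C has a right (or left) indicator A⁰. If Φ is an automorphism of C that fixes the objects A₀ and A⁰ and induces the identity map on Hom(A₀, A⁰), then Φ is an inner automorphism of C. -/
/-!
Through the representation `Q ≅ Hom(A₀, -)`, the automorphism `Φ` induces bijections
`σ_A : Q A → Q (Φ A)`, `Q α x₀ ↦ Q (Φ α) x₀`, natural in `A`. The hypothesis on `Hom(A₀, A⁰)`
says that `σ` is the identity at `A⁰`. Naturality of `σ` then supplies the test morphisms the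
indicator asks for (preimages under `Φ` for a right indicator, images for a left one), so each
`σ_A` is `Q` of an isomorphism `A ≅ Φ A`, and these are natural because `Q` is faithful.
-/

open CategoryTheory

namespace CategoryTheory

universe u v w u' v'

variable {C : Type u} [Category.{v} C]

namespace Functor.CorepresentableBy

variable {F G : C ⥤ Type w} {X : C}

noncomputable def ofExistsUnique (x : F.obj X)
    (h : ∀ (Y : C) (y : F.obj Y), ∃! f : X ⟶ Y, F.map f x = y) : F.CorepresentableBy X where
  homEquiv {Y} := Equiv.ofBijective (fun f ↦ F.map f x)
    ⟨fun _ _ hfg ↦ (h Y _).unique hfg rfl, fun y ↦ (h Y y).exists⟩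
  homEquiv_comp g f := F.map_comp_apply f g x

def comp {D : Type u'} [Category.{v'} D] {Φ : D ⥤ C} {X : D}
    (R : F.CorepresentableBy (Φ.obj X)) (hΦ : Φ.FullyFaithful) :
    (Φ ⋙ F).CorepresentableBy X where
  homEquiv := hΦ.homEquiv.trans R.homEquiv
  homEquiv_comp _ _ := by simp [R.homEquiv_comp]

lemma comp_homEquiv {D : Type u'} [Category.{v'} D] {Φ : D ⥤ C} {X Y : D}
    (R : F.CorepresentableBy (Φ.obj X)) (hΦ : Φ.FullyFaithful) (f : X ⟶ Y) :
    (R.comp hΦ).homEquiv f = R.homEquiv (Φ.map f) :=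
  rfl

def functorIso (R : F.CorepresentableBy X) (R' : G.CorepresentableBy X) : F ≅ G :=
  NatIso.ofComponents (fun Y ↦ (R.homEquiv.symm.trans R'.homEquiv).toIso) fun _ ↦ by
    ext y
    obtain ⟨f, rfl⟩ := R.homEquiv.surjective y
    simp [← R.homEquiv_comp, ← R'.homEquiv_comp]

@[simp]
lemma functorIso_hom_app_homEquiv (R : F.CorepresentableBy X) (R' : G.CorepresentableBy X)
    {Y : C} (f : X ⟶ Y) : (R.functorIso R').hom.app Y (R.homEquiv f) = R'.homEquiv f := by
  simp [functorIso]

end Functor.CorepresentableBy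

def NatIso.ofComponentsOfFaithful {D : Type u'} [Category.{v'} D] {F G : D ⥤ C}
    (Q : C ⥤ Type w) [Q.Faithful] (σ : F ⋙ Q ⟶ G ⋙ Q) (γ : ∀ A, F.obj A ≅ G.obj A)
    (hγ : ∀ A, Q.map (γ A).hom = σ.app A) : F ≅ G :=
  NatIso.ofComponents γ fun f ↦ Q.map_injective <| by
    simpa only [Functor.comp_map, Functor.map_comp, hγ] using σ.naturality f

def IsRightIndicator (Q : C ⥤ Type w) (T : C) : Prop :=
  ∀ (A B : C) (s : Q.obj A ≃ Q.obj B),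
    (∀ ν : B ⟶ T, ∃ μ : A ⟶ T, Q.map μ = Q.map ν ∘ ⇑s) → ∃ γ : A ≅ B, Q.map γ.hom = ⇑s

def IsLeftIndicator (Q : C ⥤ Type w) (T : C) : Prop :=
  ∀ (A B : C) (s : Q.obj A ≃ Q.obj B),
    (∀ ν : T ⟶ A, ∃ μ : T ⟶ B, Q.map μ = ⇑s ∘ Q.map ν) → ∃ γ : A ≅ B, Q.map γ.hom = ⇑s

variable {Q : C ⥤ Type w} {T : C} {Φ : C ⥤ C}

lemma IsRightIndicator.exists_iso (hT : IsRightIndicator Q T) [Φ.Full] (σ : Q ≅ Φ ⋙ Q)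
    (e : T ≅ Φ.obj T) (he : σ.hom.app T = Q.map e.hom) (A : C) :
    ∃ γ : A ≅ Φ.obj A, Q.map γ.hom = σ.hom.app A := by
  obtain ⟨γ, hγ⟩ := hT A (Φ.obj A) (σ.app A).toEquiv fun ν ↦ by
    refine ⟨Φ.preimage (ν ≫ e.hom), ?_⟩
    have h : Q.map (Φ.preimage (ν ≫ e.hom)) = σ.hom.app A ≫ Q.map ν := by
      have hnat := σ.hom.naturality (Φ.preimage (ν ≫ e.hom))
      rw [he, Functor.comp_map, Φ.map_preimage, Q.map_comp] at hnat
      rw [← cancel_mono (Q.map e.hom), hnat, Category.assoc]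
    rw [h, hom_comp]
    rfl
  exact ⟨γ, ConcreteCategory.coe_ext hγ⟩

lemma IsLeftIndicator.exists_iso (hT : IsLeftIndicator Q T) (σ : Q ≅ Φ ⋙ Q)
    (e : T ≅ Φ.obj T) (he : σ.hom.app T = Q.map e.hom) (A : C) :
    ∃ γ : A ≅ Φ.obj A, Q.map γ.hom = σ.hom.app A := by
  obtain ⟨γ, hγ⟩ := hT A (Φ.obj A) (σ.app A).toEquiv fun ν ↦ by
    refine ⟨e.hom ≫ Φ.map ν, ?_⟩
    have h : Q.map (e.hom ≫ Φ.map ν) = Q.map ν ≫ σ.hom.app A := by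
      rw [Q.map_comp, ← he]
      exact (σ.hom.naturality ν).symm
    rw [h, hom_comp]
    rfl
  exact ⟨γ, ConcreteCategory.coe_ext hγ⟩

end CategoryTheory

/-- Let `C` be a category with a faithful functor `Q : C ⥤ Type`
represented by an object `A₀` (via `x₀`), and suppose `C` has a right (or left)
indicator `A⁰`.  If `Φ` is an automorphism of `C` that fixes the objects `A₀` and `A⁰`
and induces the identity map on `Hom(A₀, A⁰)`, then `Φ` is an inner automorphism. -/
theorem stmt12 {C : Type u} [Category.{v} C] (Q : C ⥤ Type w) [Q.Faithful]
    (A₀ : C) (x₀ : Q.obj A₀)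
    (hrep : ∀ (A : C) (a : Q.obj A), ∃! α : A₀ ⟶ A, Q.map α x₀ = a)
    (Atop : C)
    (hind :
      (∀ (A B : C) (s : Q.obj A ≃ Q.obj B),
        (∀ ν : B ⟶ Atop, ∃ μ : A ⟶ Atop, Q.map μ = Q.map ν ∘ ⇑s) →
        ∃ γ : A ≅ B, Q.map γ.hom = ⇑s) ∨
      (∀ (A B : C) (s : Q.obj A ≃ Q.obj B),
        (∀ ν : Atop ⟶ A, ∃ μ : Atop ⟶ B, Q.map μ = ⇑s ∘ Q.map ν) →
        ∃ γ : A ≅ B, Q.map γ.hom = ⇑s))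
    (Φ Φinv : C ⥤ C) (hΦ1 : Φ ⋙ Φinv = 𝟭 C) (hΦ2 : Φinv ⋙ Φ = 𝟭 C)
    (h₀ : Φ.obj A₀ = A₀) (htop : Φ.obj Atop = Atop)
    (hHom : ∀ ν : A₀ ⟶ Atop, eqToHom h₀.symm ≫ Φ.map ν ≫ eqToHom htop = ν) :
    Nonempty (𝟭 C ≅ Φ) := by
  let R := Functor.CorepresentableBy.ofExistsUnique x₀ hrep
  let hΦ : Φ.FullyFaithful :=
    (CategoryTheory.Equivalence.mk Φ Φinv (eqToIso hΦ1.symm) (eqToIso hΦ2)).fullyFaithfulFunctor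
  let σ : Q ≅ Φ ⋙ Q := R.functorIso ((R.ofIsoObj (eqToIso h₀)).comp hΦ)
  have hσ : σ.hom.app Atop = Q.map (eqToHom htop.symm) := by
    refine ConcreteCategory.ext_apply fun t ↦ ?_
    obtain ⟨ν, rfl⟩ := R.homEquiv.surjective t
    rw [← R.homEquiv_comp]
    simp only [σ, Functor.CorepresentableBy.functorIso_hom_app_homEquiv]
    rw [Functor.CorepresentableBy.comp_homEquiv]
    simpa using hHom ν =≫ eqToHom htop.symm
  have hiso : ∀ A, ∃ γ : A ≅ Φ.obj A, Q.map γ.hom = σ.hom.app A := by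
    rcases hind with hR | hL
    · have := hΦ.full
      exact IsRightIndicator.exists_iso hR σ (eqToIso htop.symm) hσ
    · exact IsLeftIndicator.exists_iso hL σ (eqToIso htop.symm) hσ
  choose γ hγ using hiso
  exact ⟨NatIso.ofComponentsOfFaithful Q σ.hom γ hγ⟩
end

section
/- Let Θ⁰ be the full subcategory of a variety V of universal algebras consisting of the free algebras over finite subsets of a fixed infinite set X₀, let F₀ be the free algebra over the one-element set {x₀}, and suppose there exists an object F⁰ = F(X) in Θ⁰ that generates the variety V. Let ν₀ : F⁰ → F₀ be the homomorphism induced by the constant map X → {x₀}. If Φ is an automorphism of Θ⁰ that fixes all objects, induces the identity map on the endomorphism monoid End(F⁰), and satisfies Φ(ν₀) = ν₀, then Φ is an inner automorphism of Θ⁰. -/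
/-!
Read `Φ` as an identity-on-objects operation `T` on morphisms. Since `ν₀` hits `x₀`, it is a split
epimorphism, so `T ν₀ = ν₀` and `T` fixing `End F1` force `T` to fix every `β : F₀ ⟶ F1`
(cancel `ν₀` from `ν₀ ≫ T β = T (ν₀ ≫ β) = ν₀ ≫ β`). Identifying `Q A` with `F₀ ⟶ A`, `T` becomes a
natural permutation `s_A` of `Q A`, and for `ν : A ⟶ F1` the morphism `T⁻¹ ν` satisfies
`Q (T⁻¹ ν) = Q ν ∘ s_A`. As `F1` is a right indicator, `s_A` is realised by an automorphism `γ_A`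
of `A`, and faithfulness of `Q` turns the naturality of `s` into that of `γ : 𝟭 C ≅ Φ`.
-/

open CategoryTheory

universe u v w

namespace CategoryTheory

variable {C : Type u} [Category.{v} C]

namespace Functor

variable (Φ : C ⥤ C) (h : ∀ A, Φ.obj A = A)

def mapOfObjEq {A B : C} (f : A ⟶ B) : A ⟶ B :=
  eqToHom (h A).symm ≫ Φ.map f ≫ eqToHom (h B)

variable {Φ h}

@[simp]
lemma mapOfObjEq_comp {A B D : C} (f : A ⟶ B) (g : B ⟶ D) :
    Φ.mapOfObjEq h (f ≫ g) = Φ.mapOfObjEq h f ≫ Φ.mapOfObjEq h g := by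
  simp [mapOfObjEq]

lemma mapOfObjEq_eq_of_epi {X Y Z : C} (ν : X ⟶ Y) [Epi ν] (hν : Φ.mapOfObjEq h ν = ν)
    (β : Y ⟶ Z) (hνβ : Φ.mapOfObjEq h (ν ≫ β) = ν ≫ β) : Φ.mapOfObjEq h β = β := by
  rwa [mapOfObjEq_comp, hν, cancel_epi] at hνβ

variable (h) in
def FullyFaithful.mapOfObjEqEquiv (hΦ : Φ.FullyFaithful) (A B : C) : (A ⟶ B) ≃ (A ⟶ B) :=
  hΦ.homEquiv.trans ((eqToIso (h A)).homCongr (eqToIso (h B)))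

@[simp]
lemma FullyFaithful.mapOfObjEq_mapOfObjEqEquiv_symm (hΦ : Φ.FullyFaithful) {A B : C}
    (f : A ⟶ B) : Φ.mapOfObjEq h ((hΦ.mapOfObjEqEquiv h A B).symm f) = f :=
  (hΦ.mapOfObjEqEquiv h A B).apply_symm_apply f

def fullyFaithfulOfCompEqId {Ψ : C ⥤ C} (h₁ : Φ ⋙ Ψ = 𝟭 C) (h₂ : Ψ ⋙ Φ = 𝟭 C) :
    Φ.FullyFaithful :=
  (Equivalence.mk Φ Ψ (eqToIso h₁.symm) (eqToIso h₂)).fullyFaithfulFunctor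

variable {Q : C ⥤ Type w}

def IsUniversalElement {F₀ : C} (x₀ : Q.obj F₀) : Prop :=
  ∀ (A : C) (a : Q.obj A), ∃! α : F₀ ⟶ A, Q.map α x₀ = a

variable (Q) in
def IsRightIndicator (F1 : C) : Prop :=
  ∀ (A B : C) (s : Q.obj A ≃ Q.obj B),
    (∀ ν : B ⟶ F1, ∃ μ : A ⟶ F1, Q.map μ = Q.map ν ∘ ⇑s) → ∃ γ : A ≅ B, Q.map γ.hom = ⇑s

namespace IsUniversalElement

section

variable {F₀ : C} {x₀ : Q.obj F₀} (hx₀ : IsUniversalElement x₀)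

noncomputable def equiv (A : C) : (F₀ ⟶ A) ≃ Q.obj A :=
  Equiv.ofBijective (fun α => Q.map α x₀)
    ⟨fun _ _ hαβ => (hx₀ A _).unique rfl hαβ.symm, fun a => (hx₀ A a).exists⟩

@[simp]
lemma equiv_apply {A : C} (α : F₀ ⟶ A) : hx₀.equiv A α = Q.map α x₀ := rfl

lemma equiv_symm_comp {A B : C} (a : Q.obj A) (f : A ⟶ B) :
    (hx₀.equiv A).symm a ≫ f = (hx₀.equiv B).symm (Q.map f a) := by
  rw [Equiv.eq_symm_apply, equiv_apply, Functor.map_comp_apply, ← equiv_apply hx₀,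
    Equiv.apply_symm_apply]

lemma equiv_symm_comp_eq_id {Y : C} (ν : Y ⟶ F₀) (y : Q.obj Y) (hy : Q.map ν y = x₀) :
    (hx₀.equiv Y).symm y ≫ ν = 𝟙 F₀ := by
  rw [hx₀.equiv_symm_comp, hy, Equiv.symm_apply_eq, equiv_apply, Functor.map_id]
  rfl

variable (hΦ : Φ.FullyFaithful)

variable (h) in
noncomputable def conjEquiv (A : C) : Q.obj A ≃ Q.obj A :=
  (hx₀.equiv A).symm.trans ((hΦ.mapOfObjEqEquiv h F₀ A).trans (hx₀.equiv A))

lemma conjEquiv_apply {A : C} (a : Q.obj A) :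
    hx₀.conjEquiv h hΦ A a = Q.map (Φ.mapOfObjEq h ((hx₀.equiv A).symm a)) x₀ :=
  rfl

lemma conjEquiv_map {A B : C} (f : A ⟶ B) (a : Q.obj A) :
    hx₀.conjEquiv h hΦ B (Q.map f a) = Q.map (Φ.mapOfObjEq h f) (hx₀.conjEquiv h hΦ A a) := by
  rw [conjEquiv_apply, conjEquiv_apply, ← equiv_symm_comp, mapOfObjEq_comp,
    Functor.map_comp_apply]

lemma map_preimage {F1 : C} (hfix : ∀ β : F₀ ⟶ F1, Φ.mapOfObjEq h β = β)
    {A : C} (ν : A ⟶ F1) :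
    Q.map ((hΦ.mapOfObjEqEquiv h A F1).symm ν) = Q.map ν ∘ hx₀.conjEquiv h hΦ A := by
  funext a
  set α := (hx₀.equiv A).symm a
  have hα : α ≫ (hΦ.mapOfObjEqEquiv h A F1).symm ν = Φ.mapOfObjEq h α ≫ ν := by
    rw [← hfix (α ≫ _), mapOfObjEq_comp, FullyFaithful.mapOfObjEq_mapOfObjEqEquiv_symm]
  have ha : a = Q.map α x₀ := ((hx₀.equiv A).apply_symm_apply a).symm
  rw [Function.comp_apply, conjEquiv_apply, ← Functor.map_comp_apply, ← hα,
    Functor.map_comp_apply, ← ha]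

end

theorem nonempty_iso_of_isRightIndicator [Q.Faithful] {F₀ : C} {x₀ : Q.obj F₀}
    (hx₀ : IsUniversalElement x₀) (hΦ : Φ.FullyFaithful) {F1 : C} (hind : IsRightIndicator Q F1)
    (hfix : ∀ β : F₀ ⟶ F1, Φ.mapOfObjEq h β = β) :
    Nonempty (𝟭 C ≅ Φ) := by
  choose γ hγ using fun A => hind A A (hx₀.conjEquiv h hΦ A)
    fun ν => ⟨(hΦ.mapOfObjEqEquiv h A F1).symm ν, hx₀.map_preimage hΦ hfix ν⟩
  refine ⟨NatIso.ofComponents (fun A => γ A ≪≫ eqToIso (h A).symm) fun {A B} f => ?_⟩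
  have hnat : f ≫ (γ B).hom = (γ A).hom ≫ Φ.mapOfObjEq h f := by
    refine Q.map_injective (ConcreteCategory.hom_ext _ _ fun a => ?_)
    rw [Functor.map_comp_apply, Functor.map_comp_apply, hγ, hγ]
    exact hx₀.conjEquiv_map hΦ f a
  rw [Functor.id_map, Iso.trans_hom, ← Category.assoc, hnat, mapOfObjEq]
  simp

end IsUniversalElement

end Functor

end CategoryTheory

theorem stmt14_general {C : Type u} [Category.{v} C] (Q : C ⥤ Type w) [Q.Faithful]
    (F₀ : C) (x₀ : Q.obj F₀)
    (hrep : ∀ (A : C) (a : Q.obj A), ∃! α : F₀ ⟶ A, Q.map α x₀ = a)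
    (F1 : C) (X : Type w) [Nonempty X] (m : X → Q.obj F1)
    (hind : ∀ (A B : C) (s : Q.obj A ≃ Q.obj B),
      (∀ ν : B ⟶ F1, ∃ μ : A ⟶ F1, Q.map μ = Q.map ν ∘ ⇑s) →
      ∃ γ : A ≅ B, Q.map γ.hom = ⇑s)
    (ν₀ : F1 ⟶ F₀) (hν₀ : ∀ x : X, Q.map ν₀ (m x) = x₀)
    (Φ Φinv : C ⥤ C) (hΦ1 : Φ ⋙ Φinv = 𝟭 C) (hΦ2 : Φinv ⋙ Φ = 𝟭 C)
    (hobj : ∀ A : C, Φ.obj A = A)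
    (hEnd : ∀ ν : F1 ⟶ F1,
      eqToHom (hobj F1).symm ≫ Φ.map ν ≫ eqToHom (hobj F1) = ν)
    (hν : eqToHom (hobj F1).symm ≫ Φ.map ν₀ ≫ eqToHom (hobj F₀) = ν₀) :
    Nonempty (𝟭 C ≅ Φ) := by
  obtain ⟨x⟩ := ‹Nonempty X›
  have : IsSplitEpi ν₀ :=
    IsSplitEpi.mk' ⟨_, Functor.IsUniversalElement.equiv_symm_comp_eq_id hrep ν₀ (m x) (hν₀ x)⟩
  have hfix : ∀ β : F₀ ⟶ F1, Φ.mapOfObjEq hobj β = β :=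
    fun β => Functor.mapOfObjEq_eq_of_epi ν₀ hν β (hEnd _)
  exact Functor.IsUniversalElement.nonempty_iso_of_isRightIndicator hrep
    (Functor.fullyFaithfulOfCompEqId hΦ1 hΦ2) hind hfix

/-- Reduction Theorem: Let `Θ⁰` be the category of finitely generated
free algebras of a variety `V` (a category `C` with faithful forgetful functor `Q`),
let `F₀` be the free algebra on one generator `x₀` (so `Q` is represented by
`(F₀, x₀)`), and let `F1 = F(X)` be a free object over a nonempty set `X` (via
`m : X → Q(F1)`) that generates the variety `V` — equivalently, `F1` is a right
indicator in `C`.  Let `ν₀ : F1 ⟶ F₀` be the homomorphism induced by the constant map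
`X → {x₀}`.  If `Φ` is an automorphism of `C` that fixes all objects, induces the
identity on `End(F1)`, and satisfies `Φ(ν₀) = ν₀`, then `Φ` is inner. -/
theorem stmt14 {C : Type u} [Category.{v} C] (Q : C ⥤ Type w) [Q.Faithful]
    (F₀ : C) (x₀ : Q.obj F₀)
    (hrep : ∀ (A : C) (a : Q.obj A), ∃! α : F₀ ⟶ A, Q.map α x₀ = a)
    (F1 : C) (X : Type w) [Nonempty X] (m : X → Q.obj F1)
    (hfree : ∀ (A : C) (f : X → Q.obj A), ∃! g : F1 ⟶ A, ∀ x, Q.map g (m x) = f x)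
    (hind : ∀ (A B : C) (s : Q.obj A ≃ Q.obj B),
      (∀ ν : B ⟶ F1, ∃ μ : A ⟶ F1, Q.map μ = Q.map ν ∘ ⇑s) →
      ∃ γ : A ≅ B, Q.map γ.hom = ⇑s)
    (ν₀ : F1 ⟶ F₀) (hν₀ : ∀ x : X, Q.map ν₀ (m x) = x₀)
    (Φ Φinv : C ⥤ C) (hΦ1 : Φ ⋙ Φinv = 𝟭 C) (hΦ2 : Φinv ⋙ Φ = 𝟭 C)
    (hobj : ∀ A : C, Φ.obj A = A)
    (hEnd : ∀ ν : F1 ⟶ F1,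
      eqToHom (hobj F1).symm ≫ Φ.map ν ≫ eqToHom (hobj F1) = ν)
    (hν : eqToHom (hobj F1).symm ≫ Φ.map ν₀ ≫ eqToHom (hobj F₀) = ν₀) :
    Nonempty (𝟭 C ≅ Φ) :=
  stmt14_general Q F₀ x₀ hrep F1 X m hind ν₀ hν₀ Φ Φinv hΦ1 hΦ2 hobj hEnd hν
end

section
/- Let C be a full subcategory of the category of V-algebras containing a monogenic free algebra A₀, and let Φ be an automorphism of C fixing A₀ given by a family of bijections s_A : A → Φ(A); let A* denote the algebra structure on the underlying set of Φ(A) transported along s_A (so s_A : A → A* is an isomorphism). Then Φ is inner if and only if there exists a central function A ↦ c_A (a family of permutations c_A of the underlying sets determining the identity automorphism, i.e., c_B ∘ ν ∘ c_A⁻¹ = ν for every homomorphism ν : A → B in C) such that c_{Φ(A)} is an algebra isomorphism of Φ(A) onto A* for every object A. -/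
open FirstOrder

/-- Let `C` be a full subcategory of the category of algebras of a variety
(structures for an algebraic language `L` with all homomorphisms as morphisms), given by
an indexed family `M i`, containing a monogenic free algebra `M i₀` (free on `x₀`).
Let `Φ` be an automorphism of `C` (a bijective-on-objects, bijective-on-hom-sets functor
`(Φobj, Φmap)`) fixing `M i₀`, and let `s_A : A → Φ(A)` be the induced bijections
`s_A(a) = Φ(α_a)(x₀)`.  The algebra `A*` is the structure on the underlying set of
`Φ(A)` transported along `s_A`; a map `c : Φ(A) → A*` is an algebra isomorphism iff it
factors as `c = s_A ∘ g` for an `L`-isomorphism `g : Φ(A) ≃[L] A`.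
Then `Φ` is inner (there is a family of `L`-isomorphisms `τ_A : A ≃[L] Φ(A)` with
`Φ(ν) = τ_B ∘ ν ∘ τ_A⁻¹`) if and only if there is a central function `c` (a family of
permutations `c_A` of the underlying sets with `c_B ∘ ν ∘ c_A⁻¹ = ν` for all morphisms
`ν`) such that each `c_{Φ(A)}` is an algebra isomorphism of `Φ(A)` onto `A*`. -/
theorem stmt15 {L : Language} (halg : ∀ n, IsEmpty (L.Relations n))
    {ι : Type*} (M : ι → Type u) [∀ i, L.Structure (M i)]
    (i₀ : ι) (x₀ : M i₀)
    (hrep : ∀ (i : ι) (a : M i), ∃! α : M i₀ →[L] M i, α x₀ = a)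
    (α : ∀ (i : ι) (_ : M i), M i₀ →[L] M i) (hα : ∀ i a, α i a x₀ = a)
    (Φobj : ι → ι) (hΦobj : Function.Bijective Φobj)
    (Φmap : ∀ {i j : ι}, (M i →[L] M j) → (M (Φobj i) →[L] M (Φobj j)))
    (hΦmap : ∀ i j : ι, Function.Bijective (@Φmap i j))
    (hΦid : ∀ i : ι, Φmap (Language.Hom.id L (M i)) = Language.Hom.id L (M (Φobj i)))
    (hΦcomp : ∀ {i j k : ι} (f : M i →[L] M j) (g : M j →[L] M k),
      Φmap (g.comp f) = (Φmap g).comp (Φmap f))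
    (hfix : Φobj i₀ = i₀)
    (s : ∀ i : ι, M i → M (Φobj i))
    (hs : ∀ (i : ι) (a : M i), s i a = Φmap (α i a) (cast (congrArg M hfix.symm) x₀)) :
    (∃ τ : ∀ i : ι, M i ≃[L] M (Φobj i),
      ∀ (i j : ι) (ν : M i →[L] M j) (a : M i), Φmap ν (τ i a) = τ j (ν a)) ↔
    (∃ c : ∀ i : ι, M i ≃ M i,
      (∀ (i j : ι) (ν : M i →[L] M j) (a : M i), c j (ν a) = ν (c i a)) ∧
      (∀ i : ι, ∃ g : M (Φobj i) ≃[L] M i,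
        ∀ b : M (Φobj i), c (Φobj i) b = s i (g b))) := by

  classical
  -- uniqueness of representing homs
  have hαu : ∀ (i : ι) (a : M i) (β : M i₀ →[L] M i), β x₀ = a → β = α i a := by
    intro i a β hβ
    exact (hrep i a).unique hβ (hα i a)
  -- naturality of s
  have hnat : ∀ (i j : ι) (ν : M i →[L] M j) (a : M i),
      s j (ν a) = Φmap ν (s i a) := by
    intro i j ν a
    have h1 : ν.comp (α i a) = α j (ν a) := by
      apply hαu
      simp [hα]
    rw [hs, hs, ← h1, hΦcomp]
    simp
  -- uniqueness of homs out of M (Φobj i₀), determined by value at the cast of x₀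
  have huniq : ∀ (k : ι) (h : k = i₀) (j : ι) (β γ : M k →[L] M j),
      β (cast (congrArg M h.symm) x₀) = γ (cast (congrArg M h.symm) x₀) → β = γ := by
    intro k h
    subst h
    intro j β γ hβγ
    simp only [cast_eq] at hβγ
    rw [hαu j (β x₀) β rfl, hαu j (γ x₀) γ rfl, hβγ]
  have hexist : ∀ (k : ι) (h : k = i₀) (j : ι) (b : M j),
      ∃ β : M k →[L] M j, β (cast (congrArg M h.symm) x₀) = b := by
    intro k h
    subst h
    intro j b
    exact ⟨α j b, by simp [hα]⟩
  -- s is bijective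
  have hsinj : ∀ i, Function.Injective (s i) := by
    intro i a a' hsa
    rw [hs, hs] at hsa
    have h2 : α i a = α i a' := (hΦmap i₀ i).1 (huniq _ hfix _ _ _ hsa)
    calc a = α i a x₀ := (hα i a).symm
      _ = α i a' x₀ := by rw [h2]
      _ = a' := hα i a'
  have hssurj : ∀ i, Function.Surjective (s i) := by
    intro i b
    obtain ⟨β, hβ⟩ := hexist _ hfix _ b
    obtain ⟨γ, hγ⟩ := (hΦmap i₀ i).2 β
    refine ⟨γ x₀, ?_⟩
    rw [hs, ← hαu i (γ x₀) γ rfl, hγ, hβ]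
  constructor
  · rintro ⟨τ, hτ⟩
    -- the local central pieces on Φobj-indexed objects
    have hcentral' : ∀ (i j : ι) (ν : M (Φobj i) →[L] M (Φobj j)) (a : M (Φobj i)),
        s j ((τ j).symm (ν a)) = ν (s i ((τ i).symm a)) := by
      intro i j ν a
      obtain ⟨μ, rfl⟩ := (hΦmap i j).2 ν
      have h1 : (τ j).symm (Φmap μ a) = μ ((τ i).symm a) := by
        apply (τ j).injective
        rw [Language.Equiv.apply_symm_apply, ← hτ i j μ ((τ i).symm a),
          Language.Equiv.apply_symm_apply]
      rw [h1, hnat]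
    let e : ι ≃ ι := Equiv.ofBijective Φobj hΦobj
    have hψ : ∀ j, Φobj (e.symm j) = j := fun j => e.apply_symm_apply j
    have hψ' : ∀ i, e.symm (Φobj i) = i := fun i => e.symm_apply_apply i
    -- the family c' of permutations of M (Φobj i)
    let c' : ∀ i, M (Φobj i) ≃ M (Φobj i) := fun i =>
      (τ i).toEquiv.symm.trans (Equiv.ofBijective (s i) ⟨hsinj i, hssurj i⟩)
    have hc'apply : ∀ i b, c' i b = s i ((τ i).symm b) := fun i b => rfl
    let c : ∀ j, M j ≃ M j := fun j =>
      ((Equiv.cast (congrArg M (hψ j))).symm.trans (c' (e.symm j))).trans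
        (Equiv.cast (congrArg M (hψ j)))
    have hcapply : ∀ j b, c j b =
        (Equiv.cast (congrArg M (hψ j)))
          (c' (e.symm j) ((Equiv.cast (congrArg M (hψ j))).symm b)) := fun j b => rfl
    refine ⟨c, ?_, ?_⟩
    · intro j k ν a
      rw [hcapply, hcapply]
      have htrans : ∀ (j' k' j k : ι) (hj : Φobj j' = j) (hk : Φobj k' = k)
          (ν : M j →[L] M k) (a : M j),
          (Equiv.cast (congrArg M hk)) (c' k' ((Equiv.cast (congrArg M hk)).symm (ν a)))
          = ν ((Equiv.cast (congrArg M hj)) (c' j' ((Equiv.cast (congrArg M hj)).symm a))) := by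
        intro j' k' j k hj hk ν a
        subst hj; subst hk
        simp only [Equiv.cast_refl, Equiv.refl_apply]
        rw [hc'apply, hc'apply]
        exact hcentral' j' k' ν a
      exact htrans _ _ _ _ (hψ j) (hψ k) ν a
    · intro i
      refine ⟨(τ i).symm, ?_⟩
      intro b
      rw [hcapply]
      have hiso : ∀ (i' i : ι) (h' : i' = i) (h : Φobj i' = Φobj i) (b : M (Φobj i)),
          (Equiv.cast (congrArg M h)) (c' i' ((Equiv.cast (congrArg M h)).symm b))
          = s i ((τ i).symm b) := by
        intro i' i h' h b
        subst h'
        simp only [Equiv.cast_refl, Equiv.refl_apply]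
        exact hc'apply i' b
      exact hiso _ _ (hψ' i) (hψ (Φobj i)) b
  · rintro ⟨c, hcent, hiso⟩
    choose g hg using hiso
    refine ⟨fun i => (g i).symm, ?_⟩
    intro i j ν a
    have key : ∀ (b : M (Φobj i)), g j (Φmap ν b) = ν (g i b) := by
      intro b
      apply hsinj j
      rw [← hg j (Φmap ν b), hcent _ _ (Φmap ν) b, hg i b, hnat]
    have := key ((g i).symm a)
    rw [Language.Equiv.apply_symm_apply] at this
    apply (g j).injective
    rw [this, Language.Equiv.apply_symm_apply]
end

section
/- Let C be a full subcategory of the category of all semigroups containing the free monogenic semigroup W(x₀) and the free semigroup W(x,y) on two generators, and let D be the extension of C obtained by adding all anti-homomorphisms as morphisms. If Φ is an automorphism of C that takes W(x₀) and W(x,y) to semigroups isomorphic to them, then Φ is D-inner: there exists a family of maps f_A : A → Φ(A), each an isomorphism or an anti-isomorphism of semigroups, such that Φ(ν) = f_B ∘ ν ∘ f_A⁻¹ for every homomorphism ν : A → B in C. -/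
namespace Stmt16Aux

open FreeSemigroup

noncomputable section



abbrev W := FreeSemigroup Bool


/-- iterated power: `pw w n = w^(n+1)` -/
def pw (w : W) : ℕ → W
  | 0 => w
  | n+1 => pw w n * w

lemma length_pw (w : W) (n : ℕ) : (pw w n).length = (n+1) * w.length := by
  induction n with
  | zero => simp [pw]
  | succ n ih => simp [pw, length_mul, ih]; ring

lemma pw_mul_pw (w : W) (a b : ℕ) : pw w a * pw w b = pw w (a + b + 1) := by
  induction b with
  | zero => rfl
  | succ b ih => show pw w a * (pw w b * w) = _
                 rw [← mul_assoc, ih]; rfl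

def cnt (b : Bool) (w : W) : ℕ := (w.head :: w.tail).count b

lemma cnt_of (b c : Bool) : cnt b (of c) = if c = b then 1 else 0 := by
  by_cases h : c = b <;> simp [cnt, FreeSemigroup.of, List.count_cons, h]

lemma cnt_mul (b : Bool) (u v : W) : cnt b (u * v) = cnt b u + cnt b v := by
  simp [cnt, FreeSemigroup.tail_mul, FreeSemigroup.head_mul, List.count_cons,
    List.count_append]
  omega

lemma cnt_add_cnt (w : W) : cnt false w + cnt true w = w.length := by
  induction w using FreeSemigroup.recOnMul with
  | ih1 b => cases b <;> simp [cnt_of, length_of]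
  | ih2 u v hu hv => simp [cnt_mul, length_mul, ← hu, ← hv]; ring

lemma length_one_eq_of {w : W} (h : w.length = 1) : ∃ b, w = of b := by
  induction w using FreeSemigroup.recOnMul with
  | ih1 b => exact ⟨b, rfl⟩
  | ih2 u v hu hv =>
      exfalso
      have h1 : (of u).length = 1 := length_of u
      have h2 : 0 < v.length := Nat.succ_pos _
      rw [length_mul] at h; omega





def xx : W := of false
def yy : W := of true

def αh (w : W) : W →ₙ* W := lift (fun _ => w)

def swH : W →ₙ* W := map not

@[simp] lemma alpha_of (w : W) (b : Bool) : αh w (of b) = w := lift_of _ _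

lemma alpha_eq_pw (w v : W) : αh w v = pw w (v.length - 1) := by
  induction v using FreeSemigroup.recOnMul with
  | ih1 b => simp [length_of, pw]
  | ih2 u v hu hv =>
      have h1 : 0 < (of u).length := Nat.succ_pos _
      have h2 : 0 < v.length := Nat.succ_pos _
      rw [map_mul, hu, hv, pw_mul_pw, length_mul]
      congr 1
      omega

lemma alpha_congr (w : W) {v v' : W} (h : v.length = v'.length) : αh w v = αh w v' := by
  rw [alpha_eq_pw, alpha_eq_pw, h]

lemma length_alpha (w v : W) : (αh w v).length = w.length * v.length := by
  have h2 : 0 < v.length := Nat.succ_pos _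
  rw [alpha_eq_pw, length_pw]
  have : v.length - 1 + 1 = v.length := by omega
  rw [this, Nat.mul_comm]

lemma hom_ext₂ {S : Type*} [Mul S] {f g : W →ₙ* S} (hx : f xx = g xx) (hy : f yy = g yy) :
    f = g := by
  apply FreeSemigroup.hom_ext
  funext b
  cases b
  · exact hx
  · exact hy

lemma endo_length (μ : W →ₙ* W) (w : W) :
    (μ w).length = cnt false w * (μ xx).length + cnt true w * (μ yy).length := by
  induction w using FreeSemigroup.recOnMul with
  | ih1 b => cases b <;> simp [cnt_of, xx, yy]
  | ih2 u v hu hv => rw [map_mul, length_mul, hu, hv, cnt_mul, cnt_mul]; ring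

lemma endo_length_ge (μ : W →ₙ* W) (w : W) : w.length ≤ (μ w).length := by
  have h1 : 0 < (μ xx).length := Nat.succ_pos _
  have h2 : 0 < (μ yy).length := Nat.succ_pos _
  have := endo_length μ w
  have := cnt_add_cnt w
  nlinarith

@[simp] lemma sw_of (b : Bool) : swH (of b) = of (!b) := map_of _ _
@[simp] lemma sw_x : swH xx = yy := rfl
@[simp] lemma sw_y : swH yy = xx := rfl

lemma sw_sw (w : W) : swH (swH w) = w := by
  induction w using FreeSemigroup.recOnMul with
  | ih1 b => simp
  | ih2 u v hu hv => rw [map_mul, map_mul, hu, hv]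

lemma length_sw (w : W) : (swH w).length = w.length := length_map _ _

lemma xx_ne_yy : xx ≠ yy := by
  intro h
  exact Bool.noConfusion (congrArg FreeSemigroup.head h)

lemma cnt_true_zero {w : W} (h : cnt true w = 0) : w = pw xx (w.length - 1) := by
  induction w using FreeSemigroup.recOnMul with
  | ih1 b =>
      cases b
      · simp [length_of, pw, xx]
      · simp [cnt_of] at h
  | ih2 u v hu hv =>
      rw [cnt_mul] at h
      have h1 : cnt true (of u) = 0 := by omega
      have h2 : cnt true v = 0 := by omega
      have h3 : 0 < (of u).length := Nat.succ_pos _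
      have h4 : 0 < v.length := Nat.succ_pos _
      rw [length_mul]
      conv_lhs => rw [hu h1, hv h2, pw_mul_pw]
      congr 1
      omega

lemma cnt_true_pw_xx (n : ℕ) : cnt true (pw xx n) = 0 := by
  induction n with
  | zero => simp [pw, xx, cnt_of]
  | succ n ih =>
      rw [show pw xx (n+1) = pw xx n * xx from rfl, cnt_mul, ih]
      simp [xx, cnt_of]

/-- classification of involutions of `W` -/
lemma invol {σ : W →ₙ* W} (h2 : ∀ w, σ (σ w) = w) (hne : σ ≠ MulHom.id W) : σ = swH := by
  have hlen : ∀ w : W, (σ w).length = w.length := by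
    intro w
    have a1 := endo_length_ge σ w
    have a2 := endo_length_ge σ (σ w)
    rw [h2 w] at a2
    omega
  obtain ⟨b, hb⟩ := length_one_eq_of (by rw [hlen xx]; rfl)
  obtain ⟨c, hc⟩ := length_one_eq_of (by rw [hlen yy]; rfl)
  cases b <;> cases c
  · -- σ xx = xx, σ yy = xx : contradiction with h2 yy
    exfalso
    have := h2 yy
    rw [show σ yy = xx from hc, show σ xx = xx from hb] at this
    exact xx_ne_yy this
  · -- σ = id
    exact absurd (hom_ext₂ (f := σ) (g := MulHom.id W) hb hc) hne
  · -- σ = swH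
    exact hom_ext₂ hb hc
  · -- σ xx = yy, σ yy = yy
    exfalso
    have := h2 xx
    rw [show σ xx = yy from hb, show σ yy = yy from hc] at this
    exact xx_ne_yy this.symm


lemma length_two_eq {w : W} (h : w.length = 2) : ∃ b c, w = of b * of c := by
  induction w using FreeSemigroup.recOnMul with
  | ih1 b => simp [length_of] at h
  | ih2 u v hu hv =>
      rw [length_mul, length_of] at h
      have h1 : v.length = 1 := by omega
      obtain ⟨c, rfl⟩ := length_one_eq_of h1
      exact ⟨u, c, rfl⟩



variable {t tinv : W → W}

lemma step_s (hli : ∀ w, tinv (t w) = w) (hri : ∀ w, t (tinv w) = w)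
    (fwd : ∀ ν : W →ₙ* W, ∃ μ : W →ₙ* W, ∀ w, t (ν w) = μ (t w)) :
    ∀ w, t (swH w) = swH (t w) := by
  obtain ⟨μ, hμ⟩ := fwd swH
  have hμμ : ∀ u, μ (μ u) = u := by
    intro u
    have h1 := hμ (tinv u)
    rw [hri] at h1
    have h2 := hμ (swH (tinv u))
    rw [sw_sw, hri] at h2
    rw [h1] at h2
    exact h2.symm
  have hne : μ ≠ MulHom.id W := by
    intro h
    subst h
    have := hμ xx
    simp only [MulHom.id_apply] at this
    have h2 : swH xx = xx := by rw [← hli (swH xx), this, hli]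
    rw [sw_x] at h2
    exact xx_ne_yy h2.symm
  have := invol hμμ hne
  subst this
  intro w
  exact hμ w

lemma stepA (hli : ∀ w, tinv (t w) = w) (hri : ∀ w, t (tinv w) = w)
    (fwd : ∀ ν : W →ₙ* W, ∃ μ : W →ₙ* W, ∀ w, t (ν w) = μ (t w))
    (bwd : ∀ μ : W →ₙ* W, ∃ ν : W →ₙ* W, ∀ w, t (ν w) = μ (t w)) :
    (∀ u v, t (αh u v) = αh (t u) (t v)) ∧ (tinv xx).length = 1 := by
  have hts := step_s hli hri fwd
  have tinj : Function.Injective t := fun a b h => by rw [← hli a, h, hli]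
  have tsurj : Function.Surjective t := fun u => ⟨tinv u, hri u⟩
  -- part b : each t ∘ αh w factors as αh c ∘ t
  have hb : ∀ w : W, ∃ c, ∀ v, t (αh w v) = αh c (t v) := by
    intro w
    obtain ⟨μ, hμ⟩ := fwd (αh w)
    have hkey : ∀ u, μ (swH u) = μ u := by
      intro u
      obtain ⟨v, rfl⟩ := tsurj u
      calc μ (swH (t v)) = μ (t (swH v)) := by rw [hts]
        _ = t (αh w (swH v)) := (hμ _).symm
        _ = t (αh w v) := by rw [alpha_congr w (length_sw v)]
        _ = μ (t v) := hμ v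
    have hxy : μ yy = μ xx := by
      have := hkey xx
      rwa [sw_x] at this
    refine ⟨μ xx, fun v => ?_⟩
    have hμa : μ = αh (μ xx) := hom_ext₂ (by simp [αh, xx, lift_of]) (by rw [hxy]; simp [αh, xx, yy, lift_of])
    conv_lhs => rw [hμ v, hμa]
  -- part c : surjectivity
  have hc : ∀ z : W, ∃ w, ∀ v, t (αh w v) = αh z (t v) := by
    intro z
    obtain ⟨ν, hν⟩ := bwd (αh z)
    have hkey : ∀ v, ν (swH v) = ν v := by
      intro v
      apply tinj
      calc t (ν (swH v)) = αh z (t (swH v)) := hν _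
        _ = αh z (swH (t v)) := by rw [hts]
        _ = αh z (t v) := alpha_congr z (length_sw (t v))
        _ = t (ν v) := (hν v).symm
    have hxy : ν yy = ν xx := by
      have := hkey xx
      rwa [sw_x] at this
    have hνa : ν = αh (ν xx) := hom_ext₂ (by simp [αh, xx, lift_of]) (by rw [hxy]; simp [αh, xx, yy, lift_of])
    exact ⟨ν xx, fun v => by rw [← hνa]; exact hν v⟩
  -- part d : tinv xx has length one
  set r := tinv xx with hr
  have htr : t r = xx := hri xx
  have hall : ∀ u : W, ∃ w, u = αh w r := by
    intro u
    obtain ⟨w, hw⟩ := hc (t u)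
    have h1 := hw r
    rw [htr] at h1
    have h2 : αh (t u) xx = t u := alpha_of _ false
    rw [h2] at h1
    exact ⟨w, (tinj h1).symm⟩
  have hrl : r.length = 1 := by
    obtain ⟨w, hw⟩ := hall xx
    have h1 : (1:ℕ) = w.length * r.length := by
      have := congrArg FreeSemigroup.length hw
      rwa [length_alpha] at this
    exact Nat.eq_one_of_mul_eq_one_left h1.symm
  refine ⟨fun u v => ?_, hrl⟩
  obtain ⟨c, hcv⟩ := hb u
  obtain ⟨b, hbr⟩ := length_one_eq_of hrl
  have hur : αh u r = u := by rw [hbr]; exact alpha_of u b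
  have hcu : c = t u := by
    have := hcv r
    rw [hur, htr] at this
    rw [this]
    exact (alpha_of _ false).symm
  rw [hcv v, hcu]



variable {t tinv : W → W}

lemma fwd' (hli : ∀ w, tinv (t w) = w) (hri : ∀ w, t (tinv w) = w)
    (bwd : ∀ μ : W →ₙ* W, ∃ ν : W →ₙ* W, ∀ w, t (ν w) = μ (t w)) :
    ∀ ν : W →ₙ* W, ∃ μ : W →ₙ* W, ∀ w, tinv (ν w) = μ (tinv w) := by
  intro ν
  obtain ⟨ν', hν'⟩ := bwd ν
  refine ⟨ν', fun w => ?_⟩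
  have h := hν' (tinv w)
  rw [hri] at h
  rw [← h, hli]

lemma bwd' (hli : ∀ w, tinv (t w) = w) (hri : ∀ w, t (tinv w) = w)
    (fwd : ∀ ν : W →ₙ* W, ∃ μ : W →ₙ* W, ∀ w, t (ν w) = μ (t w)) :
    ∀ μ : W →ₙ* W, ∃ ν : W →ₙ* W, ∀ w, tinv (ν w) = μ (tinv w) := by
  intro μ
  obtain ⟨μ₂, hμ₂⟩ := fwd μ
  refine ⟨μ₂, fun w => ?_⟩
  have h := hμ₂ (tinv w)
  rw [hri] at h
  rw [← h, hli]

lemma stepB (hli : ∀ w, tinv (t w) = w) (hri : ∀ w, t (tinv w) = w)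
    (fwd : ∀ ν : W →ₙ* W, ∃ μ : W →ₙ* W, ∀ w, t (ν w) = μ (t w))
    (bwd : ∀ μ : W →ₙ* W, ∃ ν : W →ₙ* W, ∀ w, t (ν w) = μ (t w))
    (hx : t xx = xx) (hy : t yy = yy) :
    t (xx * yy) = xx * yy ∨ t (xx * yy) = yy * xx := by
  have tinj : Function.Injective t := fun a b h => by rw [← hli a, h, hli]
  have hA := (stepA hli hri fwd bwd).1
  have hA' := (stepA hri hli (fwd' hli hri bwd) (bwd' hli hri fwd)).1
  have htinvx : tinv xx = xx := by have := hli xx; rwa [hx] at this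
  have htinvy : tinv yy = yy := by have := hli yy; rwa [hy] at this
  -- the length transformation function
  set M : ℕ → ℕ := fun n => (t (pw xx (n - 1))).length with hM
  have hMlen : ∀ v : W, (t v).length = M v.length := by
    intro v
    have h := hA xx v
    rw [hx] at h
    have l1 : t (pw xx (v.length - 1)) = αh xx (t v) := by rw [← alpha_eq_pw]; exact h
    have l2 := congrArg FreeSemigroup.length l1
    rw [length_alpha] at l2
    have l3 : xx.length = 1 := rfl
    rw [l3, one_mul] at l2
    exact l2.symm
  have hM1 : M 1 = 1 := by
    have : t (pw xx 0) = xx := hx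
    simp [hM, this]
    rfl
  -- t and tinv map powers of xx to powers of xx
  have hpw : ∀ n : ℕ, ∃ m, t (pw xx n) = pw xx m := by
    intro n
    have h := hA xx (pw xx n)
    rw [hx] at h
    have e : αh xx (pw xx n) = pw xx n := by
      rw [alpha_eq_pw, length_pw]
      congr 1
      have : xx.length = 1 := rfl
      rw [this]
      omega
    rw [e] at h
    exact ⟨_, by rw [h, alpha_eq_pw]⟩
  have hpw' : ∀ n : ℕ, ∃ m, tinv (pw xx n) = pw xx m := by
    intro n
    have h := hA' xx (pw xx n)
    rw [htinvx] at h
    have e : αh xx (pw xx n) = pw xx n := by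
      rw [alpha_eq_pw, length_pw]
      congr 1
      have : xx.length = 1 := rfl
      rw [this]
      omega
    rw [e] at h
    exact ⟨_, by rw [h, alpha_eq_pw]⟩
  -- cnt true vanishing is preserved
  have hcnt0 : ∀ v : W, cnt true v ≠ 0 → cnt true (t v) ≠ 0 := by
    intro v hv hc
    apply hv
    have h1 := cnt_true_zero hc
    obtain ⟨m, hm⟩ := hpw' ((t v).length - 1)
    have h2 : v = pw xx m := by rw [← hli v, h1, hm]
    rw [h2]
    exact cnt_true_pw_xx m
  -- M 2 is at least 2
  have hlen2 : (xx * yy : W).length = 2 := rfl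
  have hxxlen : (xx * xx : W).length = 2 := rfl
  have htxx : (t (xx * xx)).length = M 2 := by rw [hMlen, hxxlen]
  have hM2 : 2 ≤ M 2 := by
    by_contra hcon
    push_neg at hcon
    have hpos : 0 < (t (xx * xx)).length := Nat.succ_pos _
    have h1 : (t (xx * xx)).length = 1 := by omega
    obtain ⟨b, hb⟩ := length_one_eq_of h1
    cases b
    · have heq : t (xx * xx) = t xx := by rw [hb, hx]; rfl
      have h2 := congrArg FreeSemigroup.length (tinj heq)
      have hxl : xx.length = 1 := rfl
      rw [hxxlen, hxl] at h2
      omega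
    · have heq : t (xx * xx) = t yy := by rw [hb, hy]; rfl
      have h2 := congrArg FreeSemigroup.length (tinj heq)
      have hyl : yy.length = 1 := rfl
      rw [hxxlen, hyl] at h2
      omega
  -- strict monotonicity of M
  have hmono : ∀ n, 1 ≤ n → M n < M (n + 1) := by
    intro n hn
    rcases Nat.lt_or_ge n 2 with h2 | h2
    · have hn1 : n = 1 := by omega
      subst hn1
      have e : (1 + 1 : ℕ) = 2 := rfl
      rw [hM1, e]
      omega
    · set v : W := pw xx (n - 2) * yy with hv
      have hxl : xx.length = 1 := rfl
      have hyl : yy.length = 1 := rfl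
      have hvlen : v.length = n := by
        rw [hv, length_mul, length_pw, hxl, hyl]
        omega
      have hcv : cnt true v = 1 := by
        rw [hv, cnt_mul, cnt_true_pw_xx]
        simp [yy, cnt_of]
      set ν : W →ₙ* W := FreeSemigroup.lift (fun b => bif b then xx * xx else xx) with hνdef
      have hνx : ν xx = xx := rfl
      have hνy : ν yy = xx * xx := rfl
      obtain ⟨μ, hμ⟩ := fwd ν
      have hμx : μ xx = xx := by
        have := hμ xx
        rw [hνx, hx] at this
        exact this.symm
      have hμylen : (μ yy).length = M 2 := by
        have := hμ yy
        rw [hνy, hy] at this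
        rw [← this, htxx]
      have hμxlen : (μ xx).length = 1 := by rw [hμx]; exact hxl
      have hνvlen : (ν v).length = n + 1 := by
        rw [endo_length ν v, hνx, hνy, hxl, hxxlen, hcv]
        have := cnt_add_cnt v
        rw [hvlen] at this
        omega
      have hfin : M (n + 1) = cnt false (t v) * 1 + cnt true (t v) * M 2 := by
        have h5 := endo_length μ (t v)
        rw [hμxlen, hμylen] at h5
        have h6 : (t (ν v)).length = M (n + 1) := by rw [hMlen, hνvlen]
        rw [hμ v] at h6
        rw [← h6, h5]
      have hc1 : cnt false (t v) + cnt true (t v) = M n := by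
        rw [cnt_add_cnt (t v), hMlen, hvlen]
      have hc2 : 1 ≤ cnt true (t v) :=
        Nat.pos_of_ne_zero (hcnt0 v (by omega))
      have h6 : cnt true (t v) * 2 ≤ cnt true (t v) * M 2 :=
        Nat.mul_le_mul (le_refl _) hM2
      linarith [hfin, hc1, hc2, h6]
  -- M dominates the identity
  have hge : ∀ k, 1 ≤ k → k ≤ M k := by
    intro k
    induction k with
    | zero => omega
    | succ k ih =>
        intro _
        rcases Nat.lt_or_ge k 1 with hk | hk
        · have : k = 0 := by omega
          subst this
          rw [hM1]
        · have := ih hk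
          have := hmono k hk
          omega
  -- M is surjective onto positive integers
  have hsurj : ∀ p, 1 ≤ p → ∃ n, 1 ≤ n ∧ M n = p := by
    intro p hp
    refine ⟨(tinv (pw xx (p - 1))).length, Nat.succ_pos _, ?_⟩
    have h := hMlen (tinv (pw xx (p - 1)))
    rw [hri] at h
    have hz : (pw xx (p - 1)).length = p := by
      rw [length_pw]
      have hxl : xx.length = 1 := rfl
      rw [hxl]
      omega
    rw [hz] at h
    exact h.symm
  -- M is the identity
  have hMid : ∀ n, 1 ≤ n → M n = n := by
    intro n
    induction n using Nat.strong_induction_on with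
    | _ n ih =>
      intro hn
      obtain ⟨k, hk1, hk⟩ := hsurj n hn
      have hkn : k ≤ n := by have := hge k hk1; omega
      rcases Nat.eq_or_lt_of_le hkn with he | hl
      · rw [he] at hk
        exact hk
      · have := ih k hl hk1
        omega
  have hlenpres : ∀ v : W, (t v).length = v.length := by
    intro v
    rw [hMlen]
    exact hMid v.length (Nat.succ_pos _)
  -- final exclusion of the squares
  set c := t (xx * yy) with hc
  have hclen : c.length = 2 := by
    rw [hc, hlenpres]
    rfl
  obtain ⟨b1, b2, hbb⟩ := length_two_eq hclen
  set μ₀ : W →ₙ* W := FreeSemigroup.lift (fun b => bif b then yy else c) with hμ₀def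
  have hμ₀x : μ₀ xx = c := rfl
  have hμ₀y : μ₀ yy = yy := rfl
  obtain ⟨ν, hν⟩ := bwd μ₀
  have hνx : ν xx = xx * yy := by
    apply tinj
    rw [hν xx, hx, hμ₀x, hc]
  have hνy : ν yy = yy := by
    apply tinj
    rw [hν yy, hy, hμ₀y]
  have h3 : (ν (xx * yy)).length = 3 := by
    rw [map_mul, length_mul, hνx, hνy]
    rfl
  have hL3 : (μ₀ c).length = 3 := by
    have h5 := hν (xx * yy)
    have h4 : (t (ν (xx * yy))).length = 3 := by rw [hlenpres, h3]
    rw [h5] at h4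
    rw [hc]
    exact h4
  rw [hbb, map_mul, length_mul] at hL3
  cases b1 <;> cases b2
  · exfalso
    have e1 : (μ₀ (of false)).length = 2 := by
      rw [show μ₀ (of false) = c from rfl, hclen]
    omega
  · exact Or.inl hbb
  · exact Or.inr hbb
  · exfalso
    have e1 : (μ₀ (of true)).length = 1 := rfl
    omega



variable {t tinv : W → W}

lemma crux (hli : ∀ w, tinv (t w) = w) (hri : ∀ w, t (tinv w) = w)
    (fwd : ∀ ν : W →ₙ* W, ∃ μ : W →ₙ* W, ∀ w, t (ν w) = μ (t w))
    (bwd : ∀ μ : W →ₙ* W, ∃ ν : W →ₙ* W, ∀ w, t (ν w) = μ (t w)) :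
    t (xx * yy) = t xx * t yy ∨ t (xx * yy) = t yy * t xx := by
  have hts := step_s hli hri fwd
  have hrl : (t xx).length = 1 :=
    (stepA hri hli (fwd' hli hri bwd) (bwd' hli hri fwd)).2
  have hty : t yy = swH (t xx) := by
    have := hts xx
    rw [sw_x] at this
    exact this
  obtain ⟨b, hb⟩ := length_one_eq_of hrl
  cases b
  · -- t xx = xx
    have hx : t xx = xx := hb
    have hy : t yy = yy := by rw [hty, hx, sw_x]
    rcases stepB hli hri fwd bwd hx hy with h | h
    · left; rw [h, hx, hy]
    · right; rw [h, hx, hy]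
  · -- t xx = yy
    have hx : t xx = yy := hb
    have hy : t yy = xx := by rw [hty, hx, sw_y]
    have hli' : ∀ w, (fun w => tinv (swH w)) ((fun w => swH (t w)) w) = w := by
      intro w
      simp only
      rw [sw_sw, hli]
    have hri' : ∀ w, (fun w => swH (t w)) ((fun w => tinv (swH w)) w) = w := by
      intro w
      simp only
      rw [hri, sw_sw]
    have fwd2 : ∀ ν : W →ₙ* W, ∃ μ : W →ₙ* W, ∀ w,
        (fun w => swH (t w)) (ν w) = μ ((fun w => swH (t w)) w) := by
      intro ν
      obtain ⟨μ, hμ⟩ := fwd ν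
      refine ⟨swH.comp (μ.comp swH), fun w => ?_⟩
      show swH (t (ν w)) = swH (μ (swH (swH (t w))))
      rw [sw_sw, hμ]
    have bwd2 : ∀ μ : W →ₙ* W, ∃ ν : W →ₙ* W, ∀ w,
        (fun w => swH (t w)) (ν w) = μ ((fun w => swH (t w)) w) := by
      intro μ
      obtain ⟨ν, hν⟩ := bwd (swH.comp (μ.comp swH))
      refine ⟨ν, fun w => ?_⟩
      show swH (t (ν w)) = μ (swH (t w))
      rw [hν]
      show swH (swH (μ (swH (t w)))) = _
      rw [sw_sw]
    have hx' : (fun w => swH (t w)) xx = xx := by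
      show swH (t xx) = xx
      rw [hx, sw_y]
    have hy' : (fun w => swH (t w)) yy = yy := by
      show swH (t yy) = yy
      rw [hy, sw_x]
    rcases stepB (t := fun w => swH (t w)) (tinv := fun w => tinv (swH w))
        hli' hri' fwd2 bwd2 hx' hy' with h | h
    · left

      have h2 : t (xx * yy) = swH (xx * yy) :=
        calc t (xx * yy) = swH (swH (t (xx * yy))) := (sw_sw _).symm
          _ = swH (xx * yy) := by rw [h]
      rw [h2, map_mul, sw_x, sw_y, hx, hy]
    · right

      have h2 : t (xx * yy) = swH (yy * xx) :=
        calc t (xx * yy) = swH (swH (t (xx * yy))) := (sw_sw _).symm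
          _ = swH (yy * xx) := by rw [h]
      rw [h2, map_mul, sw_y, sw_x, hx, hy]



def epsHom {A B : Type*} [Semigroup A] [Semigroup B]
    (h1 : A ≃* FreeSemigroup PUnit) (a : B) : A →ₙ* B :=
  (FreeSemigroup.lift (fun _ => a)).comp h1.toMulHom

lemma epsHom_apply {A B : Type*} [Semigroup A] [Semigroup B]
    (h1 : A ≃* FreeSemigroup PUnit) (a : B) :
    epsHom h1 a (h1.symm (of PUnit.unit)) = a := by
  simp [epsHom, MulHom.comp_apply, MulEquiv.apply_symm_apply, lift_of]

lemma hom_ext_one {A B : Type*} [Semigroup A] [Semigroup B]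
    (h1 : A ≃* FreeSemigroup PUnit) {f g : A →ₙ* B}
    (h : f (h1.symm (of PUnit.unit)) = g (h1.symm (of PUnit.unit))) : f = g := by
  have key : ∀ w : FreeSemigroup PUnit, f (h1.symm w) = g (h1.symm w) := by
    intro w
    induction w using FreeSemigroup.recOnMul with
    | ih1 p => cases p; exact h
    | ih2 p v hp hv => rw [map_mul, map_mul, map_mul, hp, hv]
  apply DFunLike.ext
  intro a
  have := key (h1 a)
  rwa [MulEquiv.symm_apply_apply] at this

lemma hom_ext_two {A B : Type*} [Semigroup A] [Semigroup B]
    (h2 : A ≃* FreeSemigroup Bool) {f g : A →ₙ* B}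
    (hf : f (h2.symm xx) = g (h2.symm xx))
    (ht : f (h2.symm yy) = g (h2.symm yy)) : f = g := by
  have key : ∀ w : W, f (h2.symm w) = g (h2.symm w) := by
    intro w
    induction w using FreeSemigroup.recOnMul with
    | ih1 b => cases b; exact hf; exact ht
    | ih2 p v hp hv => rw [map_mul, map_mul, map_mul, hp, hv]
  apply DFunLike.ext
  intro a
  have := key (h2 a)
  rwa [MulEquiv.symm_apply_apply] at this



end

end Stmt16Aux

open Stmt16Aux FreeSemigroup

/-- Let `C` be a full subcategory of the category of all semigroups
(given by an indexed family of semigroups `M i`, with all semigroup homomorphisms as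
morphisms) containing the free monogenic semigroup `W(x₀)` (the object `M i₁`) and the
free semigroup `W(x,y)` on two generators (the object `M i₂`).  Let `Φ` be an
automorphism of `C` (bijective on objects and on hom-sets, functorial) taking `M i₁`
and `M i₂` to semigroups isomorphic to them.  Then `Φ` is `D`-inner, where `D` is the
extension of `C` by anti-homomorphisms: there is a family of bijections
`f_A : A ≃ Φ(A)`, each an isomorphism or an anti-isomorphism of semigroups, with
`Φ(ν) = f_B ∘ ν ∘ f_A⁻¹` for every homomorphism `ν : A → B` of `C`. -/
theorem stmt16 {ι : Type*} (M : ι → Type u) [∀ i, Semigroup (M i)]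
    (i₁ i₂ : ι)
    (h₁ : Nonempty (M i₁ ≃* FreeSemigroup PUnit))
    (h₂ : Nonempty (M i₂ ≃* FreeSemigroup Bool))
    (Φobj : ι → ι) (hΦobj : Function.Bijective Φobj)
    (Φmap : ∀ {i j : ι}, (M i →ₙ* M j) → (M (Φobj i) →ₙ* M (Φobj j)))
    (hΦmap : ∀ i j : ι, Function.Bijective (@Φmap i j))
    (hΦid : ∀ i : ι, Φmap (MulHom.id (M i)) = MulHom.id (M (Φobj i)))
    (hΦcomp : ∀ {i j k : ι} (f : M i →ₙ* M j) (g : M j →ₙ* M k),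
      Φmap (g.comp f) = (Φmap g).comp (Φmap f))
    (hiso₁ : Nonempty (M (Φobj i₁) ≃* M i₁))
    (hiso₂ : Nonempty (M (Φobj i₂) ≃* M i₂)) :
    ∃ f : ∀ i : ι, M i ≃ M (Φobj i),
      (∀ i : ι, (∀ a b : M i, f i (a * b) = f i a * f i b) ∨
        (∀ a b : M i, f i (a * b) = f i b * f i a)) ∧
      (∀ (i j : ι) (ν : M i →ₙ* M j) (a : M i), Φmap ν (f i a) = f j (ν a)) := by
  classical
  obtain ⟨h1⟩ := h₁
  obtain ⟨h2⟩ := h₂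
  obtain ⟨g1⟩ := hiso₁
  obtain ⟨g2⟩ := hiso₂
  set e₁ : M (Φobj i₁) ≃* FreeSemigroup PUnit := g1.trans h1 with he₁
  set e₂ : M (Φobj i₂) ≃* FreeSemigroup Bool := g2.trans h2 with he₂
  set x₀ : M i₁ := h1.symm (FreeSemigroup.of PUnit.unit) with hx₀
  set gg : M (Φobj i₁) := e₁.symm (FreeSemigroup.of PUnit.unit) with hgg
  set F : ∀ i, M i → M (Φobj i) := fun i a => Φmap (epsHom h1 a) gg with hF
  -- naturality of F
  have hnat : ∀ (i j : ι) (ν : M i →ₙ* M j) (a : M i), Φmap ν (F i a) = F j (ν a) := by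
    intro i j ν a
    have heq : ν.comp (epsHom h1 a) = epsHom h1 (ν a) :=
      hom_ext_one h1 (by rw [MulHom.comp_apply, epsHom_apply, epsHom_apply])
    calc Φmap ν (F i a) = (Φmap ν).comp (Φmap (epsHom h1 a)) gg := rfl
      _ = Φmap (ν.comp (epsHom h1 a)) gg := by rw [← hΦcomp]
      _ = Φmap (epsHom h1 (ν a)) gg := by rw [heq]
  -- bijectivity of F
  have hFbij : ∀ i, Function.Bijective (F i) := by
    intro i
    constructor
    · intro a b hab
      have hϕ : Φmap (epsHom h1 a) = Φmap (epsHom h1 b) := hom_ext_one e₁ hab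
      have h2' : epsHom h1 a = epsHom h1 b := (hΦmap i₁ i).1 hϕ
      calc a = epsHom h1 a x₀ := (epsHom_apply h1 a).symm
        _ = epsHom h1 b x₀ := by rw [h2']
        _ = b := epsHom_apply h1 b
    · intro cc
      obtain ⟨ν, hν⟩ := (hΦmap i₁ i).2 (epsHom e₁ cc)
      refine ⟨ν x₀, ?_⟩
      have heq : epsHom h1 (ν x₀) = ν := hom_ext_one h1 (by rw [epsHom_apply])
      show Φmap (epsHom h1 (ν x₀)) gg = cc
      rw [heq, hν]
      exact epsHom_apply e₁ cc
  -- the two generators of M i₂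
  set u : M i₂ := h2.symm xx with hu
  set v : M i₂ := h2.symm yy with hv
  -- key multiplicativity dichotomy at i₂, via the crux lemma
  have hkey : F i₂ (u * v) = F i₂ u * F i₂ v ∨ F i₂ (u * v) = F i₂ v * F i₂ u := by
    set t : W → W := fun w => e₂ (F i₂ (h2.symm w)) with htdef
    set E : M i₂ ≃ M (Φobj i₂) := Equiv.ofBijective (F i₂) (hFbij i₂) with hE
    set tinv : W → W := fun w => h2 (E.symm (e₂.symm w)) with htinvdef
    have hli : ∀ w, tinv (t w) = w := by
      intro w
      show h2 (E.symm (e₂.symm (e₂ (F i₂ (h2.symm w))))) = w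
      rw [MulEquiv.symm_apply_apply]
      have : F i₂ (h2.symm w) = E (h2.symm w) := rfl
      rw [this, Equiv.symm_apply_apply, MulEquiv.apply_symm_apply]
    have hri : ∀ w, t (tinv w) = w := by
      intro w
      show e₂ (F i₂ (h2.symm (h2 (E.symm (e₂.symm w))))) = w
      rw [MulEquiv.symm_apply_apply]
      have : F i₂ (E.symm (e₂.symm w)) = E (E.symm (e₂.symm w)) := rfl
      rw [this, Equiv.apply_symm_apply, MulEquiv.apply_symm_apply]
    have fwd : ∀ ν : W →ₙ* W, ∃ μ : W →ₙ* W, ∀ w, t (ν w) = μ (t w) := by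
      intro ν
      set ν' : M i₂ →ₙ* M i₂ := (h2.symm.toMulHom.comp ν).comp h2.toMulHom with hν'
      refine ⟨(e₂.toMulHom.comp (Φmap ν')).comp e₂.symm.toMulHom, fun w => ?_⟩
      show e₂ (F i₂ (h2.symm (ν w))) = e₂ (Φmap ν' (e₂.symm (e₂ (F i₂ (h2.symm w)))))
      rw [MulEquiv.symm_apply_apply, hnat i₂ i₂ ν' (h2.symm w)]
      have : ν' (h2.symm w) = h2.symm (ν w) := by
        show h2.symm (ν (h2 (h2.symm w))) = h2.symm (ν w)
        rw [MulEquiv.apply_symm_apply]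
      rw [this]
    have bwd : ∀ μ : W →ₙ* W, ∃ ν : W →ₙ* W, ∀ w, t (ν w) = μ (t w) := by
      intro μ
      obtain ⟨ν', hν'⟩ := (hΦmap i₂ i₂).2 ((e₂.symm.toMulHom.comp μ).comp e₂.toMulHom)
      refine ⟨(h2.toMulHom.comp ν').comp h2.symm.toMulHom, fun w => ?_⟩
      show e₂ (F i₂ (h2.symm (h2 (ν' (h2.symm w))))) = μ (e₂ (F i₂ (h2.symm w)))
      rw [MulEquiv.symm_apply_apply, ← hnat i₂ i₂ ν' (h2.symm w), hν']
      show e₂ (e₂.symm (μ (e₂ (F i₂ (h2.symm w))))) = _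
      rw [MulEquiv.apply_symm_apply]
    have hsymm : h2.symm (xx * yy) = u * v := by rw [map_mul, hu, hv]
    rcases crux hli hri fwd bwd with hcx | hcx
    · left
      apply e₂.injective
      have h4 : e₂ (F i₂ (h2.symm (xx * yy))) = e₂ (F i₂ u) * e₂ (F i₂ v) := hcx
      rw [hsymm] at h4
      rw [map_mul]
      exact h4
    · right
      apply e₂.injective
      have h4 : e₂ (F i₂ (h2.symm (xx * yy))) = e₂ (F i₂ v) * e₂ (F i₂ u) := hcx
      rw [hsymm] at h4
      rw [map_mul]
      exact h4
  -- assemble the answer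
  refine ⟨fun i => Equiv.ofBijective (F i) (hFbij i), ?_, ?_⟩
  · intro i
    have huv : ∀ (a b : M i), ∃ ν : M i₂ →ₙ* M i, ν u = a ∧ ν v = b := by
      intro a b
      refine ⟨(FreeSemigroup.lift (fun bit => bif bit then b else a)).comp h2.toMulHom,
        ?_, ?_⟩
      · show FreeSemigroup.lift _ (h2 (h2.symm xx)) = a
        rw [MulEquiv.apply_symm_apply]
        exact lift_of _ _
      · show FreeSemigroup.lift _ (h2 (h2.symm yy)) = b
        rw [MulEquiv.apply_symm_apply]
        exact lift_of _ _
    rcases hkey with hk | hk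
    · left
      intro a b
      obtain ⟨ν, hνu, hνv⟩ := huv a b
      show F i (a * b) = F i a * F i b
      calc F i (a * b) = F i (ν (u * v)) := by rw [map_mul, hνu, hνv]
        _ = Φmap ν (F i₂ (u * v)) := (hnat i₂ i ν (u * v)).symm
        _ = Φmap ν (F i₂ u * F i₂ v) := by rw [hk]
        _ = Φmap ν (F i₂ u) * Φmap ν (F i₂ v) := map_mul _ _ _
        _ = F i (ν u) * F i (ν v) := by rw [hnat, hnat]
        _ = F i a * F i b := by rw [hνu, hνv]
    · right
      intro a b
      obtain ⟨ν, hνu, hνv⟩ := huv a b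
      show F i (a * b) = F i b * F i a
      calc F i (a * b) = F i (ν (u * v)) := by rw [map_mul, hνu, hνv]
        _ = Φmap ν (F i₂ (u * v)) := (hnat i₂ i ν (u * v)).symm
        _ = Φmap ν (F i₂ v * F i₂ u) := by rw [hk]
        _ = Φmap ν (F i₂ v) * Φmap ν (F i₂ u) := map_mul _ _ _
        _ = F i (ν v) * F i (ν u) := by rw [hnat, hnat]
        _ = F i b * F i a := by rw [hνu, hνv]
  · intro i j ν a
    exact hnat i j ν a
end

section
/- In the variety of inverse semigroups, if a unary term u(x) satisfies the identity u(u(x)) = x, then u(x) is one of x, x⁻¹, or an expression equal to x; in particular the only involutive unary term not equal to the identity is x ↦ x⁻¹. -/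
/-- An inverse semigroup: a semigroup with a unary inversion satisfying
`(xy)⁻¹ = y⁻¹x⁻¹`, `(x⁻¹)⁻¹ = x`, `x x⁻¹ x = x`, and
`x⁻¹x y⁻¹y = y⁻¹y x⁻¹x`. -/
class InverseSemigroup (M : Type u) extends Semigroup M where
  inv : M → M
  inv_mul : ∀ a b : M, inv (a * b) = inv b * inv a
  inv_inv : ∀ a : M, inv (inv a) = a
  mul_inv_mul : ∀ a : M, a * inv a * a = a
  idem_comm : ∀ a b : M, inv a * a * (inv b * b) = inv b * b * (inv a * a)

/-- Unary terms `u(x)` in the language of inverse semigroups. -/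
inductive InvTerm1 : Type
  | x : InvTerm1
  | mul : InvTerm1 → InvTerm1 → InvTerm1
  | inv : InvTerm1 → InvTerm1

/-- Evaluation of a unary term `u(x)` in an inverse semigroup at `x := a`. -/
def InvTerm1.eval {M : Type u} [InverseSemigroup M] (a : M) : InvTerm1 → M
  | .x => a
  | .mul s t => InvTerm1.eval a s * InvTerm1.eval a t
  | .inv t => InverseSemigroup.inv (InvTerm1.eval a t)

/-!
Reading a word in `x, x⁻¹` as a walk on `ℤ` from `0`, record the interval `[lo, hi]` it visits
and its endpoint `deg`. In every inverse semigroup the word evaluates at `a` to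
`a ^ hi * a⁻¹ ^ (hi - lo) * a ^ (deg - lo)`, so a unary term is determined by its value at the
generator `⟨0, 1, 1⟩` of the inverse semigroup of such triples. For an argument `A` with
`deg A = ±1`, the triple of `u(A)` is an affine function of those of `u` and `A`; solving
`u(u(gen)) = gen` leaves only the triples of `x` and of `x⁻¹`.
-/

namespace InverseSemigroup

variable {M : Type*} [InverseSemigroup M]

instance : InvolutiveInv M where
  inv := InverseSemigroup.inv
  inv_inv := InverseSemigroup.inv_inv

protected theorem mul_inv_rev (a b : M) : (a * b)⁻¹ = b⁻¹ * a⁻¹ := inv_mul a b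

protected theorem mul_inv_mul_self (a : M) : a * a⁻¹ * a = a := mul_inv_mul a

protected theorem commute_inv_mul_self (a b : M) : Commute (a⁻¹ * a) (b⁻¹ * b) :=
  idem_comm a b

end InverseSemigroup

namespace WithOne

variable {M : Type*} [InverseSemigroup M]

protected theorem mul_inv_rev (x y : WithOne M) : (x * y)⁻¹ = y⁻¹ * x⁻¹ := by
  induction x using WithOne.recOneCoe <;> induction y using WithOne.recOneCoe <;>
    simp [← WithOne.coe_mul, ← WithOne.coe_inv, InverseSemigroup.mul_inv_rev]

protected theorem inv_pow (x : WithOne M) (n : ℕ) : (x ^ n)⁻¹ = x⁻¹ ^ n := by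
  induction n with
  | zero => simp
  | succ n ih => rw [pow_succ, WithOne.mul_inv_rev, ih, pow_succ']

protected theorem mul_inv_mul_self (x : WithOne M) : x * x⁻¹ * x = x := by
  induction x using WithOne.recOneCoe
  · simp
  · simp [← WithOne.coe_mul, ← WithOne.coe_inv, InverseSemigroup.mul_inv_mul_self]

protected theorem commute_inv_mul_self (x y : WithOne M) : Commute (x⁻¹ * x) (y⁻¹ * y) := by
  induction x using WithOne.recOneCoe
  · simp
  induction y using WithOne.recOneCoe
  · simp
  simp only [← WithOne.coe_mul, ← WithOne.coe_inv]
  exact (InverseSemigroup.commute_inv_mul_self _ _).map (WithOne.coeMulHom (α := M))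

theorem commute_mul_inv_self_inv_pow_mul_pow (x : WithOne M) (n : ℕ) :
    Commute (x * x⁻¹) (x⁻¹ ^ n * x ^ n) := by
  simpa [WithOne.inv_pow] using WithOne.commute_inv_mul_self x⁻¹ (x ^ n)

theorem mul_inv_pow_succ_mul_pow_succ (x : WithOne M) (n : ℕ) :
    x * (x⁻¹ ^ (n + 1) * x ^ (n + 1)) = x⁻¹ ^ n * x ^ (n + 1) :=
  calc x * (x⁻¹ ^ (n + 1) * x ^ (n + 1))
      = x * x⁻¹ * (x⁻¹ ^ n * x ^ n) * x := by
        rw [pow_succ' x⁻¹, pow_succ x]; simp only [mul_assoc]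
    _ = x⁻¹ ^ n * x ^ n * (x * x⁻¹ * x) := by
      rw [(commute_mul_inv_self_inv_pow_mul_pow x n).eq]; simp only [mul_assoc]
    _ = x⁻¹ ^ n * x ^ (n + 1) := by
      rw [WithOne.mul_inv_mul_self, pow_succ, mul_assoc]

theorem inv_pow_mul_pow_succ_mul_inv (x : WithOne M) {i k : ℕ} (h : i < k) :
    x⁻¹ ^ k * x ^ (i + 1) * x⁻¹ = x⁻¹ ^ k * x ^ i := by
  obtain ⟨j, rfl⟩ := Nat.exists_eq_add_of_lt h
  have hinv : x⁻¹ * x * x⁻¹ = x⁻¹ := by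
    simpa using WithOne.mul_inv_mul_self x⁻¹
  calc x⁻¹ ^ (i + j + 1) * x ^ (i + 1) * x⁻¹
      = x⁻¹ ^ j * x⁻¹ * ((x⁻¹ ^ i * x ^ i) * (x * x⁻¹)) := by
        rw [show i + j + 1 = j + 1 + i by omega]; simp only [pow_add, pow_succ, mul_assoc]
    _ = x⁻¹ ^ j * (x⁻¹ * x * x⁻¹) * (x⁻¹ ^ i * x ^ i) := by
      rw [← (commute_mul_inv_self_inv_pow_mul_pow x i).eq]; simp only [mul_assoc]
    _ = x⁻¹ ^ (i + j + 1) * x ^ i := by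
      rw [hinv, show i + j + 1 = j + 1 + i by omega]; simp only [pow_add, pow_succ, mul_assoc]

end WithOne

/-- Declared in an arbitrary universe, so that it can serve as a test semigroup in any universe. -/
@[ext]
structure Munn : Type u where
  lo : ℤ
  deg : ℤ
  hi : ℤ

namespace Munn

instance : Mul Munn :=
  ⟨fun p q => ⟨min p.lo (p.deg + q.lo), p.deg + q.deg, max p.hi (p.deg + q.hi)⟩⟩

@[simp] theorem lo_mul (p q : Munn) : (p * q).lo = min p.lo (p.deg + q.lo) := rfl
@[simp] theorem deg_mul (p q : Munn) : (p * q).deg = p.deg + q.deg := rfl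
@[simp] theorem hi_mul (p q : Munn) : (p * q).hi = max p.hi (p.deg + q.hi) := rfl

instance : InverseSemigroup Munn where
  mul_assoc p q r := by ext <;> simp <;> omega
  inv p := ⟨p.lo - p.deg, -p.deg, p.hi - p.deg⟩
  inv_mul p q := by ext <;> simp <;> omega
  inv_inv p := by ext <;> simp
  mul_inv_mul p := by ext <;> simp
  idem_comm p q := by ext <;> simp <;> omega

@[simp] theorem lo_inv (p : Munn) : p⁻¹.lo = p.lo - p.deg := rfl
@[simp] theorem deg_inv (p : Munn) : p⁻¹.deg = -p.deg := rfl
@[simp] theorem hi_inv (p : Munn) : p⁻¹.hi = p.hi - p.deg := rfl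

def gen : Munn := ⟨0, 1, 1⟩

@[simp] theorem lo_gen : gen.lo = 0 := rfl
@[simp] theorem deg_gen : gen.deg = 1 := rfl
@[simp] theorem hi_gen : gen.hi = 1 := rfl

/-- The triples of words in `x, x⁻¹`, the empty word giving `⟨0, 0, 0⟩`. -/
structure Valid (p : Munn) : Prop where
  lo_nonpos : p.lo ≤ 0
  hi_nonneg : 0 ≤ p.hi
  lo_le_deg : p.lo ≤ p.deg
  deg_le_hi : p.deg ≤ p.hi

theorem Valid.mul {p q : Munn} (hp : p.Valid) (hq : q.Valid) : (p * q).Valid := by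
  obtain ⟨_, _, _, _⟩ := hp; obtain ⟨_, _, _, _⟩ := hq
  constructor <;> simp <;> omega

theorem Valid.inv {p : Munn} (hp : p.Valid) : p⁻¹.Valid := by
  obtain ⟨_, _, _, _⟩ := hp
  constructor <;> simp <;> omega

theorem valid_gen : gen.Valid := ⟨le_rfl, zero_le_one, zero_le_one, le_rfl⟩

variable {M : Type*} [InverseSemigroup M]

def eval (a : M) (p : Munn) : WithOne M :=
  (a : WithOne M) ^ p.hi.toNat * (a : WithOne M)⁻¹ ^ (p.hi - p.lo).toNat *
    (a : WithOne M) ^ (p.deg - p.lo).toNat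

theorem eval_mul_gen (a : M) {p : Munn} (hp : p.Valid) :
    p.eval a * a = (p * gen).eval a := by
  obtain ⟨_, _, hlo, hhi⟩ := hp
  simp only [eval]
  rcases hhi.lt_or_eq with hlt | heq
  · have hlo' : (p * gen).lo = p.lo := by simp; omega
    have hhi' : (p * gen).hi = p.hi := by simp; omega
    have hdeg : ((p * gen).deg - p.lo).toNat = (p.deg - p.lo).toNat + 1 := by simp; omega
    rw [hlo', hhi', hdeg, pow_succ, mul_assoc _ (_ ^ _)]
  · have hk : (p * gen).hi.toNat = p.hi.toNat + 1 := by simp; omega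
    have hn : ((p * gen).hi - (p * gen).lo).toNat = (p.hi - p.lo).toNat + 1 := by
      simp; omega
    have hn' : ((p * gen).deg - (p * gen).lo).toNat = (p.hi - p.lo).toNat + 1 := by
      simp; omega
    have hdeg : (p.deg - p.lo).toNat = (p.hi - p.lo).toNat := by omega
    rw [hk, hn, hn', hdeg]
    generalize (a : WithOne M) = x, p.hi.toNat = k, (p.hi - p.lo).toNat = n
    rw [show x ^ k * x⁻¹ ^ n * x ^ n * x = x ^ k * (x⁻¹ ^ n * x ^ (n + 1)) by
      rw [pow_succ]; simp only [mul_assoc], ← WithOne.mul_inv_pow_succ_mul_pow_succ, pow_succ x k]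
    simp only [mul_assoc]

theorem eval_mul_gen_inv (a : M) {p : Munn} (hp : p.Valid) :
    p.eval a * (a : WithOne M)⁻¹ = (p * gen⁻¹).eval a := by
  obtain ⟨_, _, hlo, hhi⟩ := hp
  simp only [eval]
  have hhi' : (p * gen⁻¹).hi = p.hi := by simp; omega
  rcases hlo.lt_or_eq with hlt | heq
  · have hlo' : (p * gen⁻¹).lo = p.lo := by simp; omega
    have hdeg : (p.deg - p.lo).toNat = ((p * gen⁻¹).deg - p.lo).toNat + 1 := by
      simp; omega
    have hjn : ((p * gen⁻¹).deg - p.lo).toNat < (p.hi - p.lo).toNat := by simp; omega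
    rw [hlo', hhi', hdeg]
    generalize (a : WithOne M) = x, p.hi.toNat = k, (p.hi - p.lo).toNat = n,
      ((p * gen⁻¹).deg - p.lo).toNat = j at hjn ⊢
    rw [mul_assoc (x ^ k), mul_assoc (x ^ k), WithOne.inv_pow_mul_pow_succ_mul_inv x hjn,
      mul_assoc]
  · have hn : ((p * gen⁻¹).hi - (p * gen⁻¹).lo).toNat = (p.hi - p.lo).toNat + 1 := by
      simp; omega
    have hdeg : ((p * gen⁻¹).deg - (p * gen⁻¹).lo).toNat = 0 := by simp; omega
    have hdeg' : (p.deg - p.lo).toNat = 0 := by omega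
    rw [hn, hhi', hdeg, hdeg', pow_succ, pow_zero, mul_one, mul_one, mul_assoc]

end Munn

namespace InvTerm1

universe v

variable {M : Type*} [InverseSemigroup M]

@[simp] theorem eval_x (a : M) : x.eval a = a := rfl

@[simp] theorem eval_mul (s t : InvTerm1) (a : M) : (s.mul t).eval a = s.eval a * t.eval a :=
  rfl

@[simp] theorem eval_inv (s : InvTerm1) (a : M) : s.inv.eval a = (s.eval a)⁻¹ := rfl

theorem valid_eval_gen (s : InvTerm1) : (s.eval Munn.gen).Valid := by
  induction s with
  | x => exact Munn.valid_gen
  | mul s t hs ht => exact hs.mul ht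
  | inv s hs => exact hs.inv

theorem munn_eval_mul_eval (s : InvTerm1) (a : M) {p : Munn} (hp : p.Valid) :
    p.eval a * s.eval a = (p * s.eval Munn.gen).eval a ∧
      p.eval a * ((s.eval a : M) : WithOne M)⁻¹ = (p * (s.eval Munn.gen)⁻¹).eval a := by
  induction s generalizing p with
  | x => exact ⟨Munn.eval_mul_gen a hp, Munn.eval_mul_gen_inv a hp⟩
  | mul s t hs ht =>
    constructor
    · rw [eval_mul, WithOne.coe_mul, ← mul_assoc, (hs hp).1,
        (ht (hp.mul (valid_eval_gen s))).1, eval_mul, mul_assoc]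
    · rw [eval_mul, WithOne.coe_mul, WithOne.mul_inv_rev, ← mul_assoc,
        (ht hp).2, (hs (hp.mul (valid_eval_gen t).inv)).2, eval_mul,
        InverseSemigroup.mul_inv_rev, mul_assoc]
  | inv s hs =>
    rw [eval_inv, eval_inv, WithOne.coe_inv, inv_inv, inv_inv]
    exact (hs hp).symm

theorem coe_eval_eq_munn_eval (s : InvTerm1) (a : M) :
    ((s.eval a : M) : WithOne M) = (s.eval Munn.gen).eval a := by
  obtain ⟨hlo, hhi, _, _⟩ := valid_eval_gen s
  have hone : (⟨0, 0, 0⟩ : Munn).eval a = 1 := by simp [Munn.eval]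
  have hone_mul : (⟨0, 0, 0⟩ : Munn) * s.eval Munn.gen = s.eval Munn.gen := by
    ext <;> simp <;> omega
  have key := (munn_eval_mul_eval s a (p := ⟨0, 0, 0⟩) ⟨le_rfl, le_rfl, le_rfl, le_rfl⟩).1
  rwa [hone, one_mul, hone_mul] at key

theorem eval_eq_of_eval_gen_eq {s s' : InvTerm1} (h : s.eval Munn.gen = s'.eval Munn.gen)
    (a : M) : s.eval a = s'.eval a :=
  WithOne.coe_injective (by rw [coe_eval_eq_munn_eval, coe_eval_eq_munn_eval, h])

theorem deg_eval (s : InvTerm1) (p : Munn.{v}) :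
    (s.eval p).deg = (s.eval (Munn.gen : Munn.{v})).deg * p.deg := by
  induction s with
  | x => simp
  | mul s t hs ht => simp only [eval_mul, Munn.deg_mul, hs, ht]; ring
  | inv s hs => simp only [eval_inv, Munn.deg_inv, hs]; ring

theorem eval_of_deg_eq_one (s : InvTerm1) {p : Munn.{v}} (hp : p.deg = 1) :
    s.eval p = ⟨(s.eval (Munn.gen : Munn.{v})).lo + p.lo, (s.eval (Munn.gen : Munn.{v})).deg,
      (s.eval (Munn.gen : Munn.{v})).hi + p.hi - 1⟩ := by
  induction s with
  | x => ext <;> simp [hp]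
  | mul s t hs ht => rw [eval_mul, hs, ht]; ext <;> simp <;> omega
  | inv s hs => rw [eval_inv, hs]; ext <;> simp <;> omega

theorem eval_of_deg_eq_neg_one (s : InvTerm1) {p : Munn.{v}} (hp : p.deg = -1) :
    s.eval p = ⟨p.lo + 1 - (s.eval (Munn.gen : Munn.{v})).hi, -(s.eval (Munn.gen : Munn.{v})).deg,
      p.hi - (s.eval (Munn.gen : Munn.{v})).lo⟩ := by
  induction s with
  | x => ext <;> simp [hp]
  | mul s t hs ht => rw [eval_mul, hs, ht]; ext <;> simp <;> omega
  | inv s hs => rw [eval_inv, hs]; ext <;> simp <;> omega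

theorem eval_gen_eq_gen_or_gen_inv {u : InvTerm1}
    (h : u.eval (u.eval (Munn.gen : Munn.{v})) = Munn.gen) :
    u.eval (Munn.gen : Munn.{v}) = Munn.gen ∨ u.eval (Munn.gen : Munn.{v}) = Munn.gen⁻¹ := by
  have hdeg : (u.eval (Munn.gen : Munn.{v})).deg * (u.eval (Munn.gen : Munn.{v})).deg = 1 := by
    simpa [deg_eval u (u.eval _)] using congrArg Munn.deg h
  obtain ⟨hlo, hhi, hlo_deg, -⟩ := valid_eval_gen.{v} u
  rcases mul_self_eq_one_iff.mp hdeg with hd | hd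
  · rw [eval_of_deg_eq_one u hd] at h
    simp only [Munn.ext_iff, Munn.lo_gen, Munn.deg_gen, Munn.hi_gen] at h
    left
    ext <;> simp <;> omega
  · rw [eval_of_deg_eq_neg_one u hd] at h
    simp only [Munn.ext_iff, Munn.lo_gen, Munn.deg_gen, Munn.hi_gen] at h
    right
    ext <;> simp <;> omega

end InvTerm1

/-- In the variety of inverse semigroups, if a unary term `u(x)`
satisfies the identity `u(u(x)) = x`, then `u(x)` is (as a term operation) equal to
`x` or to `x⁻¹`; in particular the only involutive unary term not equal to the
identity is `x ↦ x⁻¹`. -/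
theorem stmt18 (u : InvTerm1)
    (h : ∀ (M : Type u) [InverseSemigroup M] (a : M), InvTerm1.eval (u.eval a) u = a) :
    (∀ (M : Type u) [InverseSemigroup M] (a : M), u.eval a = a) ∨
    (∀ (M : Type u) [InverseSemigroup M] (a : M),
      u.eval a = InverseSemigroup.inv a) := by
  rcases InvTerm1.eval_gen_eq_gen_or_gen_inv (h Munn Munn.gen) with hu | hu
  · exact Or.inl fun M _ a => InvTerm1.eval_eq_of_eval_gen_eq (s' := .x) hu a
  · exact Or.inr fun M _ a => InvTerm1.eval_eq_of_eval_gen_eq (s' := .inv .x) hu a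
end

section
/- Every automorphism of the monoid T_X of all transformations of a set X (full transformation monoid under composition) is inner: for every monoid automorphism Φ of T_X there exists a bijection g : X → X such that Φ(f) = g ∘ f ∘ g⁻¹ for all f ∈ T_X. -/
/-- Every automorphism of the monoid `T_X = Function.End X` of all
transformations of a set `X` (under composition) is inner: for every monoid
automorphism `Φ` of `T_X` there is a bijection `g : X ≃ X` such that
`Φ(f) = g ∘ f ∘ g⁻¹` for all `f ∈ T_X`. -/
theorem stmt19 {X : Type u} (Φ : Function.End X ≃* Function.End X) :
    ∃ g : Equiv.Perm X, ∀ f : Function.End X, Φ f = ⇑g ∘ f ∘ ⇑g.symm := by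
  classical
  rcases isEmpty_or_nonempty X with h | h
  · refine ⟨Equiv.refl X, fun f => ?_⟩
    funext x
    exact (h.false x).elim
  · obtain ⟨x0⟩ := h
    set cst : X → Function.End X := fun x => (fun _ => x) with hcst
    have key : ∀ (Ψ : Function.End X ≃* Function.End X) (x : X),
        ∃ y, Ψ (cst x) = cst y := by
      intro Ψ x
      have habs : ∀ k : Function.End X, Ψ (cst x) * k = Ψ (cst x) := by
        intro k
        rw [← Ψ.apply_symm_apply k, ← map_mul]
        congr 1
      refine ⟨Ψ (cst x) x0, funext fun z => ?_⟩
      exact congrFun (habs (cst z)) x0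
    choose g0 hg0 using key Φ
    choose h0 hh0 using key Φ.symm
    have cst_inj : ∀ {a b : X}, cst a = cst b → a = b := fun hab =>
      congrFun hab x0
    have left_inv : ∀ x, h0 (g0 x) = x := by
      intro x
      apply cst_inj
      rw [← hh0, ← hg0, Φ.symm_apply_apply]
    have right_inv : ∀ y, g0 (h0 y) = y := by
      intro y
      apply cst_inj
      rw [← hg0, ← hh0, Φ.apply_symm_apply]
    set g : Equiv.Perm X := ⟨g0, h0, left_inv, right_inv⟩ with hg
    refine ⟨g, fun f => ?_⟩
    have keyeq : ∀ x, Φ f (g0 x) = g0 (f x) := by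
      intro x
      have h1 : f * cst x = cst (f x) := rfl
      have h2 : Φ (f * cst x) = Φ f * Φ (cst x) := map_mul Φ f (cst x)
      rw [h1, hg0, hg0] at h2
      exact (congrFun h2 x0).symm
    funext y
    have : y = g0 (h0 y) := (right_inv y).symm
    calc Φ f y = Φ f (g0 (h0 y)) := by rw [← this]
      _ = g0 (f (h0 y)) := keyeq _
      _ = (⇑g ∘ f ∘ ⇑g.symm) y := rfl
end
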